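/- arXiv:1611.03237 — 2 statements merged into one kernel-verified Lean document; each statement's English description precedes it below -/
import Mathlib

section
/- Fix a period L > 0, a point x₀ ∈ ℝ and an admissible nonlinearity f with zero a. Then there exists a bounded, nonnegative, nonzero function z ∈ C²([x₀,∞)) satisfying −z''(x) = z(x) f(z(x), x) for all x ∈ (x₀,∞) and z(x₀) = 0; this function is unique among bounded nonnegative nonzero C² solutions; and moreover z(x) > 0 for every x > x₀ and its right derivative at x₀ satisfies z'(x₀) > 0. -/
open MeasureTheory Set Filter Topology Function

noncomputable section

/-- An admissible nonlinearity with period `L` and zero `a`: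
`f` is `C¹`, `L`-periodic in its second variable, positive at `u = 0` uniformly in `x`,
decreasing in its first variable, and vanishes at `u = a` for all `x`. -/
structure Admissible (L : ℝ) (f : ℝ → ℝ → ℝ) (a : ℝ) : Prop where
  smooth : ContDiff ℝ 1 (uncurry f)
  periodic : ∀ u x, f u (x + L) = f u x
  pos_at_zero : ∃ m > 0, ∀ x, m ≤ f 0 x
  strict_anti : ∀ x, StrictAnti (fun u => f u x)
  zero_pos : 0 < a
  zero_root : ∀ x, f a x = 0

/-- `Zfun s φ t x = φ (x - s t, x)`. -/
def Zfun (s : ℝ) (φ : ℝ → ℝ → ℝ) : ℝ → ℝ → ℝ := fun t x => φ (x - s * t) x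

/-- A regular segregated pulsating front with speed `s` and profile `φ`. -/
structure SegFront (L d α a₁ a₂ : ℝ) (f₁ f₂ : ℝ → ℝ → ℝ) (s : ℝ)
    (φ : ℝ → ℝ → ℝ) : Prop where
  cont : Continuous (uncurry φ)
  bdd : ∃ M, ∀ ξ x, |φ ξ x| ≤ M
  per : ∀ ξ x, φ ξ (x + L) = φ ξ x
  mono : ∀ x, Antitone (fun ξ => φ ξ x)
  pos : ∃ ξ x, 0 < φ ξ x
  neg : ∃ ξ x, φ ξ x < 0
  lim_left : ∀ ε > 0, ∃ M, ∀ ξ, M ≤ ξ → ∀ x ∈ Icc (0:ℝ) L, |φ (-ξ) x - α * a₁| < ε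
  lim_right : ∀ ε > 0, ∃ M, ∀ ξ, M ≤ ξ → ∀ x ∈ Icc (0:ℝ) L, |φ ξ x + d * a₂| < ε
  pde : ∃ zt zx zxx : ℝ → ℝ → ℝ,
    (∀ t x, Zfun s φ t x ≠ 0 → HasDerivAt (fun τ => Zfun s φ τ x) (zt t x) t) ∧
    (∀ t x, Zfun s φ t x ≠ 0 → HasDerivAt (fun y => Zfun s φ t y) (zx t x) x) ∧
    (∀ t x, Zfun s φ t x ≠ 0 → HasDerivAt (fun y => zx t y) (zxx t x) x) ∧
    ContinuousOn (uncurry zt) {p : ℝ × ℝ | Zfun s φ p.1 p.2 ≠ 0} ∧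
    ContinuousOn (uncurry zx) {p : ℝ × ℝ | Zfun s φ p.1 p.2 ≠ 0} ∧
    ContinuousOn (uncurry zxx) {p : ℝ × ℝ | Zfun s φ p.1 p.2 ≠ 0} ∧
    (∀ t x, 0 < Zfun s φ t x →
      zt t x = zxx t x + Zfun s φ t x * f₁ (Zfun s φ t x / α) x) ∧
    (∀ t x, Zfun s φ t x < 0 →
      zt t x = d * zxx t x + Zfun s φ t x * f₂ (-(Zfun s φ t x) / d) x)

/-- The limiting nonlinearity `η(z, x)`. -/
def eta (d α : ℝ) (f₁ f₂ : ℝ → ℝ → ℝ) (z x : ℝ) : ℝ :=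
  f₁ (z / α) x * max z 0 - (1 / d) * f₂ (-z / d) x * (-(min z 0))

/-- A segregated stationary equilibrium. -/
structure SegEquilibrium (L d α : ℝ) (f₁ f₂ : ℝ → ℝ → ℝ) (e : ℝ → ℝ) : Prop where
  smooth : ContDiff ℝ 2 e
  bdd : ∃ M, ∀ x, |e x| ≤ M
  ode : ∀ x, -(deriv (deriv e) x) = eta d α f₁ f₂ (e x) x
  mono : ∀ x, Antitone (fun n : ℕ => e (x + n * L))
  pos : ∃ x, 0 < e x
  neg : ∃ x, e x < 0
  tail : BddBelow {x | e x < 0} ∨ BddAbove {x | 0 < e x}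

/-- The Du–Lin solution on `[x₀, ∞)`: bounded, nonnegative, nonzero, `C²`, vanishing
at `x₀`, solving `-z'' = z f(z, ·)` on `(x₀, ∞)`. -/
structure IsDuLin (x₀ : ℝ) (f : ℝ → ℝ → ℝ) (z : ℝ → ℝ) : Prop where
  diff1 : ∀ x ∈ Ici x₀, DifferentiableWithinAt ℝ z (Ici x₀) x
  diff2 : ∀ x ∈ Ici x₀,
    DifferentiableWithinAt ℝ (derivWithin z (Ici x₀)) (Ici x₀) x
  cont2 : ContinuousOn (derivWithin (derivWithin z (Ici x₀)) (Ici x₀)) (Ici x₀)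
  bdd : ∃ M, ∀ x ∈ Ici x₀, |z x| ≤ M
  nonneg : ∀ x ∈ Ici x₀, 0 ≤ z x
  nonzero : ∃ x ∈ Ici x₀, z x ≠ 0
  zero_at : z x₀ = 0
  ode : ∀ x ∈ Ioi x₀,
    -(derivWithin (derivWithin z (Ici x₀)) (Ici x₀) x) = z x * f (z x) x

/-- `∂ₜ` of a function of `(t, x)`. -/
def dT (u : ℝ → ℝ → ℝ) (t x : ℝ) : ℝ := deriv (fun τ => u τ x) t

/-- `∂ₓ` of a function of `(t, x)` (or of `(ξ, x)`). -/
def dX (u : ℝ → ℝ → ℝ) (t x : ℝ) : ℝ := deriv (fun y => u t y) x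

/-- `∂ₓₓ` of a function of `(t, x)`. -/
def dXX (u : ℝ → ℝ → ℝ) (t x : ℝ) : ℝ := deriv (fun y => dX u t y) x

/-- `∂_ξ` of a profile. -/
def dXi (φ : ℝ → ℝ → ℝ) (ξ x : ℝ) : ℝ := deriv (fun ζ => φ ζ x) ξ

/-- A pulsating front of the competition system `(P_k)`. -/
structure PkFront (L d α k a₁ a₂ : ℝ) (f₁ f₂ : ℝ → ℝ → ℝ) (c : ℝ)
    (φ₁ φ₂ : ℝ → ℝ → ℝ) : Prop where
  smooth1 : ContDiff ℝ 2 (uncurry φ₁)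
  smooth2 : ContDiff ℝ 2 (uncurry φ₂)
  per1 : ∀ ξ x, φ₁ ξ (x + L) = φ₁ ξ x
  per2 : ∀ ξ x, φ₂ ξ (x + L) = φ₂ ξ x
  mono1 : ∀ x, Antitone (fun ξ => φ₁ ξ x)
  mono2 : ∀ x, Monotone (fun ξ => φ₂ ξ x)
  pde1 : ∀ t x, dT (Zfun c φ₁) t x =
      dXX (Zfun c φ₁) t x + Zfun c φ₁ t x * f₁ (Zfun c φ₁ t x) x
        - k * Zfun c φ₁ t x * Zfun c φ₂ t x
  pde2 : ∀ t x, dT (Zfun c φ₂) t x =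
      d * dXX (Zfun c φ₂) t x + Zfun c φ₂ t x * f₂ (Zfun c φ₂ t x) x
        - α * k * Zfun c φ₁ t x * Zfun c φ₂ t x
  lim_left : ∀ ε > 0, ∃ M, ∀ ξ, ξ ≤ M → ∀ x ∈ Icc (0:ℝ) L,
      |φ₁ ξ x - a₁| < ε ∧ |φ₂ ξ x| < ε
  lim_right : ∀ ε > 0, ∃ M, ∀ ξ, M ≤ ξ → ∀ x ∈ Icc (0:ℝ) L,
      |φ₁ ξ x| < ε ∧ |φ₂ ξ x - a₂| < ε

/-- A positive pulsating front for the scalar equation `∂ₜ z = δ ∂ₓₓ z + z g(z, x)`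
connecting `a` to `0` at speed `s`. -/
structure ScalarFront (L δ a : ℝ) (g : ℝ → ℝ → ℝ) (s : ℝ) (ψ : ℝ → ℝ → ℝ) : Prop where
  smooth : ContDiff ℝ 2 (uncurry ψ)
  per : ∀ ξ x, ψ ξ (x + L) = ψ ξ x
  pos : ∀ ξ x, 0 < ψ ξ x
  pde : ∀ t x, dT (Zfun s ψ) t x =
      δ * dXX (Zfun s ψ) t x + Zfun s ψ t x * g (Zfun s ψ t x) x
  lim_left : ∀ ε > 0, ∃ M, ∀ ξ, ξ ≤ M → ∀ x ∈ Icc (0:ℝ) L, |ψ ξ x - a| < ε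
  lim_right : ∀ ε > 0, ∃ M, ∀ ξ, M ≤ ξ → ∀ x ∈ Icc (0:ℝ) L, |ψ ξ x| < ε

/-- `σ(v) = 1` if `v > 0`, `1/d` if `v < 0` (the value at `0` is irrelevant). -/
def sigmaFun (d v : ℝ) : ℝ := if 0 < v then 1 else if v < 0 then 1 / d else 0

/-- Extra regularity of a segregated pulsating front (established in the paper):
`z = Zfun s φ` is everywhere differentiable in `x` with `∂ₓ z` continuous on `ℝ²` and
negative on the zero set of `z`, and `∂ₜ z` exists off the zero set and has there the
strict sign of `s`. -/
def FrontRegular (s : ℝ) (φ zt zx : ℝ → ℝ → ℝ) : Prop :=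
  (∀ t x, HasDerivAt (fun y => Zfun s φ t y) (zx t x) x) ∧
  Continuous (uncurry zx) ∧
  (∀ t x, Zfun s φ t x = 0 → zx t x < 0) ∧
  (∀ t x, Zfun s φ t x ≠ 0 → HasDerivAt (fun τ => Zfun s φ τ x) (zt t x) t) ∧
  (0 < s → ∀ t x, Zfun s φ t x ≠ 0 → 0 < zt t x) ∧
  (s < 0 → ∀ t x, Zfun s φ t x ≠ 0 → zt t x < 0)

/-!
Truncating the reaction `u f(u, x)` outside `u ∈ [0, c]` turns `-u'' = u f(u, x)` into a globally
Lipschitz first-order system for `(u, u')`, whose solutions exist on `[x₀, ∞)` and depend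
continuously on the initial slope `b = u'(x₀)`; a bounded nonnegative solution is a trajectory of
this system once `c` exceeds its bound. Since `(a, 0)` is a stationary point, a trajectory crossing
the level `a` does so transversally and then grows at least linearly; hence bounded nonnegative
solutions stay in `[0, a]`, and since `(0, 0)` is stationary they are positive on `(x₀, ∞)` with
`u'(x₀) > 0`.

Existence is by shooting. Small slopes give solutions that become negative (Sturm comparison with
`sin (√m (x - x₀))`, where `m ≤ f` on `[0, a / 2]`), large slopes give solutions that cross `a`
first, and the supremum `b*` of the slopes of the first kind gives a solution with values in
`[0, a]`: it does not become negative since this set of slopes is open, and if it exceeded `a` so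
would the solutions of nearby slopes of the first kind.

Uniqueness: for two such solutions with slopes `b₁ < b₂`, the Wronskian `u₂' u₁ - u₁' u₂`
vanishes at `x₀` and increases as long as `u₁ < u₂`, because `f` is decreasing in `u`. Hence
`u₁ < u₂` throughout, and `u₂ / u₁` increases, which is incompatible with both solutions tending
to `a`.
-/

open scoped NNReal

section LipschitzODE

variable {E : Type*} [NormedAddCommGroup E] [NormedSpace ℝ E]
  {v : ℝ → E → E} {K : ℝ≥0} {γ₁ γ₂ : ℝ → E}

theorem IsIntegralCurveOn.eqOn_Icc (hv : ∀ t, LipschitzWith K (v t)) {a b t₁ : ℝ}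
    (h₁ : IsIntegralCurveOn γ₁ v (Icc a b)) (h₂ : IsIntegralCurveOn γ₂ v (Icc a b))
    (ht₁ : t₁ ∈ Icc a b) (heq : γ₁ t₁ = γ₂ t₁) : EqOn γ₁ γ₂ (Icc a b) := by
  have left {γ : ℝ → E} (h : IsIntegralCurveOn γ v (Icc a b)) :
      ∀ t ∈ Ioc a t₁, HasDerivWithinAt γ (v t (γ t)) (Iic t) t := fun t ht =>
    (h t ⟨ht.1.le, ht.2.trans ht₁.2⟩).mono_of_mem_nhdsWithin <|
      mem_of_superset (Icc_mem_nhdsLE ht.1) (Icc_subset_Icc_right (ht.2.trans ht₁.2))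
  have right {γ : ℝ → E} (h : IsIntegralCurveOn γ v (Icc a b)) :
      ∀ t ∈ Ico t₁ b, HasDerivWithinAt γ (v t (γ t)) (Ici t) t := fun t ht =>
    (h t ⟨ht₁.1.trans ht.1, ht.2.le⟩).mono_of_mem_nhdsWithin <|
      mem_of_superset (Icc_mem_nhdsGE ht.2) (Icc_subset_Icc_left (ht₁.1.trans ht.1))
  rw [← Icc_union_Icc_eq_Icc ht₁.1 ht₁.2]
  refine EqOn.union ?_ ?_
  · exact ODE_solution_unique_of_mem_Icc_left (s := fun _ => univ)
      (fun t _ => (hv t).lipschitzOnWith) (h₁.continuousOn.mono (Icc_subset_Icc_right ht₁.2))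
      (left h₁) (fun _ _ => trivial) (h₂.continuousOn.mono (Icc_subset_Icc_right ht₁.2))
      (left h₂) (fun _ _ => trivial) heq
  · exact ODE_solution_unique hv (h₁.continuousOn.mono (Icc_subset_Icc_left ht₁.1)) (right h₁)
      (h₂.continuousOn.mono (Icc_subset_Icc_left ht₁.1)) (right h₂) heq

theorem IsIntegralCurveOn.eqOn_Ici (hv : ∀ t, LipschitzWith K (v t)) {a t₁ : ℝ}
    (h₁ : IsIntegralCurveOn γ₁ v (Ici a)) (h₂ : IsIntegralCurveOn γ₂ v (Ici a))
    (ht₁ : a ≤ t₁) (heq : γ₁ t₁ = γ₂ t₁) : EqOn γ₁ γ₂ (Ici a) := fun t ht =>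
  (h₁.mono Icc_subset_Ici_self).eqOn_Icc hv (h₂.mono Icc_subset_Ici_self)
    ⟨ht₁, le_max_right t t₁⟩ heq ⟨ht, le_max_left t t₁⟩

theorem IsIntegralCurveOn.dist_le_Ici (hv : ∀ t, LipschitzWith K (v t)) {a t : ℝ}
    (h₁ : IsIntegralCurveOn γ₁ v (Ici a)) (h₂ : IsIntegralCurveOn γ₂ v (Ici a)) (ht : a ≤ t) :
    dist (γ₁ t) (γ₂ t) ≤ dist (γ₁ a) (γ₂ a) * Real.exp (K * (t - a)) :=
  dist_le_of_trajectories_ODE hv (h₁.continuousOn.mono Icc_subset_Ici_self)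
    (fun s hs => (h₁ s hs.1).mono (Ici_subset_Ici.2 hs.1))
    (h₂.continuousOn.mono Icc_subset_Ici_self)
    (fun s hs => (h₂ s hs.1).mono (Ici_subset_Ici.2 hs.1)) le_rfl t ⟨ht, le_rfl⟩

theorem IsIntegralCurveOn.piecewise_Icc {a b c : ℝ} (hab : a ≤ b) (hbc : b ≤ c)
    (h₁ : IsIntegralCurveOn γ₁ v (Icc a b)) (h₂ : IsIntegralCurveOn γ₂ v (Icc b c))
    (hb : γ₁ b = γ₂ b) :
    IsIntegralCurveOn (fun t => if t ≤ b then γ₁ t else γ₂ t) v (Icc a c) := by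
  set γ := fun t => if t ≤ b then γ₁ t else γ₂ t
  have e₁ : EqOn γ γ₁ (Icc a b) := fun t ht => if_pos ht.2
  have e₂ : EqOn γ γ₂ (Icc b c) := fun t ht => by
    rcases ht.1.eq_or_lt with rfl | h
    · exact (if_pos le_rfl).trans hb
    · exact if_neg (not_le.2 h)
  intro t ht
  rw [← Icc_union_Icc_eq_Icc hab hbc]
  refine HasDerivWithinAt.union ?_ ?_
  · by_cases htab : t ∈ Icc a b
    · rw [e₁ htab]; exact (h₁ t htab).congr_of_mem e₁ htab
    · exact HasFDerivWithinAt.of_notMem_closure (by rwa [closure_Icc])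
  · by_cases htbc : t ∈ Icc b c
    · rw [e₂ htbc]; exact (h₂ t htbc).congr_of_mem e₂ htbc
    · exact HasFDerivWithinAt.of_notMem_closure (by rwa [closure_Icc])

end LipschitzODE

section LipschitzODEExistence

variable {E : Type*} [NormedAddCommGroup E] [NormedSpace ℝ E] [CompleteSpace E]
  {v : ℝ → E → E} {K : ℝ≥0}

theorem exists_forall_isIntegralCurveOn_Icc_add (hv : ∀ t, LipschitzWith K (v t))
    (hc : ∀ x, Continuous (v · x)) :
    ∃ τ > 0, ∀ t₀ x, ∃ γ, γ t₀ = x ∧ IsIntegralCurveOn γ v (Icc t₀ (t₀ + τ)) := by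
  set τ : ℝ≥0 := (2 * (K + 1))⁻¹
  have hKτ : (K : ℝ) * τ ≤ 1 / 2 := by
    have : (0 : ℝ) < K + 1 := by positivity
    simp only [τ, NNReal.coe_inv, NNReal.coe_mul, NNReal.coe_add, NNReal.coe_one, NNReal.coe_ofNat]
    rw [← div_eq_mul_inv, div_le_iff₀ (by positivity)]
    nlinarith
  refine ⟨τ, by positivity, fun t₀ x => ?_⟩
  obtain ⟨C, hC⟩ := isCompact_Icc.exists_bound_of_continuousOn
    (s := Icc t₀ (t₀ + τ)) (hc x).continuousOn
  set M : ℝ≥0 := ⟨max C 0, le_max_right _ _⟩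
  -- on the ball of radius `R = 2 M τ` the field is bounded by `M + K R ≤ R / τ`, as `K τ ≤ 1 / 2`
  set R : ℝ≥0 := 2 * M * τ
  have hpl : IsPicardLindelof v (tmin := t₀) (tmax := t₀ + τ)
      ⟨t₀, le_rfl, by simp⟩ x R 0 (M + K * R) K := by
    refine ⟨fun t _ => (hv t).lipschitzOnWith, fun y _ => (hc y).continuousOn,
      fun t ht y hy => ?_, ?_⟩
    · calc ‖v t y‖ ≤ ‖v t x‖ + ‖v t y - v t x‖ := norm_le_norm_add_norm_sub' _ _
        _ ≤ M + K * R := by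
          gcongr
          · exact (hC t ht).trans (le_max_left _ _)
          · rw [← dist_eq_norm]
            exact ((hv t).dist_le_mul y x).trans
              (mul_le_mul_of_nonneg_left (Metric.mem_closedBall.1 hy) K.2)
    · have : max (t₀ + τ - t₀) (t₀ - t₀) = τ := by simp
      simp only [this, NNReal.coe_add, NNReal.coe_mul, NNReal.coe_zero, sub_zero, R,
        NNReal.coe_ofNat]
      nlinarith [mul_le_mul_of_nonneg_left hKτ (mul_nonneg M.coe_nonneg τ.coe_nonneg)]
  obtain ⟨γ, hγ₀, hγ⟩ := hpl.exists_eq_forall_mem_Icc_hasDerivWithinAt₀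
  exact ⟨γ, hγ₀, hγ⟩

theorem exists_isIntegralCurveOn_Ici (hv : ∀ t, LipschitzWith K (v t))
    (hc : ∀ x, Continuous (v · x)) (t₀ : ℝ) (x : E) :
    ∃ γ, γ t₀ = x ∧ IsIntegralCurveOn γ v (Ici t₀) := by
  obtain ⟨τ, hτ, hstep⟩ := exists_forall_isIntegralCurveOn_Icc_add hv hc
  have hn : ∀ n : ℕ, ∀ s y, ∃ γ, γ s = y ∧ IsIntegralCurveOn γ v (Icc s (s + (n + 1) * τ)) := by
    intro n
    induction n with
    | zero => simpa using hstep
    | succ n ih =>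
      intro s y
      obtain ⟨γ₁, hγ₁₀, hγ₁⟩ := hstep s y
      obtain ⟨γ₂, hγ₂₀, hγ₂⟩ := ih (s + τ) (γ₁ (s + τ))
      rw [show s + τ + (n + 1) * τ = s + ((n + 1 : ℕ) + 1) * τ by push_cast; ring] at hγ₂
      exact ⟨_, by simp [hγ₁₀, hτ.le], hγ₁.piecewise_Icc (by linarith)
        (by nlinarith [n.cast_nonneg (α := ℝ)]) hγ₂ hγ₂₀.symm⟩
  have hT : ∀ T, ∃ γ, γ t₀ = x ∧ IsIntegralCurveOn γ v (Icc t₀ T) := by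
    intro T
    obtain ⟨n, hn'⟩ := exists_nat_ge ((T - t₀) / τ)
    obtain ⟨γ, hγ₀, hγ⟩ := hn n t₀ x
    refine ⟨γ, hγ₀, hγ.mono (Icc_subset_Icc_right ?_)⟩
    rw [div_le_iff₀ hτ] at hn'
    nlinarith
  choose Γ hΓ₀ hΓ using hT
  have agree : ∀ T T', ∀ s ∈ Icc t₀ (min T T'), Γ T s = Γ T' s := fun T T' s hs =>
    ((hΓ T).mono (Icc_subset_Icc_right (min_le_left T T'))).eqOn_Icc hv
      ((hΓ T').mono (Icc_subset_Icc_right (min_le_right T T')))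
      ⟨le_rfl, hs.1.trans hs.2⟩ ((hΓ₀ T).trans (hΓ₀ T').symm) hs
  refine ⟨fun s => Γ (s + 1) s, hΓ₀ _, fun t ht => ?_⟩
  have hnhds : Icc t₀ (t + 1) ∈ 𝓝[Ici t₀] t :=
    mem_of_superset (inter_mem_nhdsWithin _ (Iio_mem_nhds (lt_add_one t)))
      fun s hs => ⟨hs.1, hs.2.le⟩
  have hloc : (fun s => Γ (s + 1) s) =ᶠ[𝓝[Ici t₀] t] Γ (t + 1) :=
    mem_of_superset hnhds fun s hs => agree _ _ s ⟨hs.1, le_min (by linarith) hs.2⟩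
  have h := ((hΓ (t + 1)) t ⟨ht, by linarith⟩).mono_of_mem_nhdsWithin hnhds
  exact h.congr_of_eventuallyEq hloc (hloc.eq_of_nhdsWithin ht)

end LipschitzODEExistence

section Calculus

variable {g g' : ℝ → ℝ} {D : Set ℝ}

theorem monotoneOn_of_forall_hasDerivWithinAt (hD : Convex ℝ D)
    (hg : ∀ x ∈ D, HasDerivWithinAt g (g' x) D x) (hg' : ∀ x ∈ interior D, 0 ≤ g' x) :
    MonotoneOn g D :=
  monotoneOn_of_hasDerivWithinAt_nonneg hD (fun x hx => (hg x hx).continuousWithinAt)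
    (fun x hx => (hg x (interior_subset hx)).mono interior_subset) hg'

theorem antitoneOn_of_forall_hasDerivWithinAt (hD : Convex ℝ D)
    (hg : ∀ x ∈ D, HasDerivWithinAt g (g' x) D x) (hg' : ∀ x ∈ interior D, g' x ≤ 0) :
    AntitoneOn g D :=
  antitoneOn_of_hasDerivWithinAt_nonpos hD (fun x hx => (hg x hx).continuousWithinAt)
    (fun x hx => (hg x (interior_subset hx)).mono interior_subset) hg'

theorem strictMonoOn_of_forall_hasDerivWithinAt (hD : Convex ℝ D)
    (hg : ∀ x ∈ D, HasDerivWithinAt g (g' x) D x) (hg' : ∀ x ∈ interior D, 0 < g' x) :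
    StrictMonoOn g D :=
  strictMonoOn_of_hasDerivWithinAt_pos hD (fun x hx => (hg x hx).continuousWithinAt)
    (fun x hx => (hg x (interior_subset hx)).mono interior_subset) hg'

theorem HasDerivAt.nonneg_of_le_of_left {c s d : ℝ} (hg : HasDerivAt g d c) (hs : s < c)
    (hle : ∀ y ∈ Ioo s c, g y ≤ g c) : 0 ≤ d := by
  refine ge_of_tendsto ((hasDerivWithinAt_iff_tendsto_slope' self_notMem_Iio).1
    hg.hasDerivWithinAt) ?_
  filter_upwards [Ioo_mem_nhdsLT hs] with y hy
  rw [slope_def_field]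
  exact div_nonneg_of_nonpos (by linarith [hle y hy]) (by linarith [hy.2])

theorem exists_first_ge {s t α : ℝ} (hst : s ≤ t) (hg : ContinuousOn g (Icc s t))
    (hs : g s < α) (ht : α ≤ g t) : ∃ c ∈ Ioc s t, g c = α ∧ ∀ y ∈ Ico s c, g y < α := by
  set T := Icc s t ∩ g ⁻¹' Ici α
  have hT : IsClosed T := hg.preimage_isClosed_of_isClosed isClosed_Icc isClosed_Ici
  have hTne : T.Nonempty := ⟨t, ⟨hst, le_rfl⟩, ht⟩
  have hTbdd : BddBelow T := ⟨s, fun y hy => hy.1.1⟩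
  obtain ⟨⟨hsc, hct⟩, hαc⟩ := hT.csInf_mem hTne hTbdd
  have before : ∀ y ∈ Ico s (sInf T), g y < α := fun y hy => not_le.1 fun h =>
    (csInf_le hTbdd ⟨⟨hy.1, hy.2.le.trans hct⟩, h⟩).not_gt hy.2
  obtain ⟨y, hy, hgy⟩ := intermediate_value_Icc hsc (hg.mono (Icc_subset_Icc_right hct))
    ⟨hs.le, hαc⟩
  have hyc : y = sInf T := le_antisymm hy.2 (csInf_le hTbdd ⟨⟨hy.1, hy.2.trans hct⟩, hgy.ge⟩)
  refine ⟨sInf T, ⟨hsc.lt_of_ne ?_, hct⟩, hyc ▸ hgy, before⟩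
  intro h
  rw [← h] at hαc
  exact hs.not_ge hαc

theorem HasDerivWithinAt.nonneg_of_le_of_right {c d : ℝ}
    (hg : HasDerivWithinAt g d (Ici c) c) (hle : ∀ y ∈ Ioi c, g c ≤ g y) : 0 ≤ d := by
  refine ge_of_tendsto ((hasDerivWithinAt_iff_tendsto_slope' self_notMem_Ioi).1
    (hasDerivWithinAt_Ioi_iff_Ici.2 hg)) (eventually_nhdsWithin_of_forall fun y hy => ?_)
  rw [slope_def_field]
  exact div_nonneg (by linarith [hle y hy]) (by linarith [mem_Ioi.1 hy])

theorem le_add_mul_sub_of_forall_hasDerivWithinAt_le {t₀ C t : ℝ}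
    (hg : ∀ x ∈ Ici t₀, HasDerivWithinAt g (g' x) (Ici t₀) x) (hle : ∀ x ∈ Ioi t₀, g' x ≤ C)
    (ht : t₀ ≤ t) : g t ≤ g t₀ + C * (t - t₀) := by
  have := antitoneOn_of_forall_hasDerivWithinAt (convex_Ici t₀)
    (fun x hx => (hg x hx).sub ((hasDerivAt_id x).const_mul C).hasDerivWithinAt)
    (fun x hx => by rw [interior_Ici] at hx; simpa using hle x hx)
    self_mem_Ici ht ht
  simp only [Pi.sub_apply, id] at this
  linarith

theorem Icc_subset_of_deriv_nonneg_above {p q r : ℝ → ℝ} {α t₁ : ℝ}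
    (hp : ∀ x ∈ Ici t₁, HasDerivAt p (q x) x) (hq : ∀ x ∈ Ici t₁, HasDerivAt q (r x) x)
    (hr : ∀ x ∈ Ici t₁, α ≤ p x → 0 ≤ r x) (hα : α ≤ p t₁) (hq₁ : 0 < q t₁) (b : ℝ) :
    Icc t₁ b ⊆ {x | q t₁ ≤ q x ∧ α ≤ p x} := by
  refine IsClosed.Icc_subset_of_forall_mem_nhdsWithin ?_ ⟨le_rfl, hα⟩ ?_
  · have hpc : ContinuousOn p (Icc t₁ b) := fun x hx =>
      (hp x hx.1).continuousAt.continuousWithinAt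
    have hqc : ContinuousOn q (Icc t₁ b) := fun x hx =>
      (hq x hx.1).continuousAt.continuousWithinAt
    have : {x | q t₁ ≤ q x ∧ α ≤ p x} ∩ Icc t₁ b =
        (Icc t₁ b ∩ q ⁻¹' Ici (q t₁)) ∩ (Icc t₁ b ∩ p ⁻¹' Ici α) := by
      ext x; simp only [mem_inter_iff, mem_ofPred_eq, mem_preimage, mem_Ici]; tauto
    rw [this]
    exact (hqc.preimage_isClosed_of_isClosed isClosed_Icc isClosed_Ici).inter
      (hpc.preimage_isClosed_of_isClosed isClosed_Icc isClosed_Ici)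
  · rintro x ⟨⟨hqx, hpx⟩, hx₁, -⟩
    -- `q > 0` near `x`, so `p` increases, stays above `α`, and `q` cannot decrease
    obtain ⟨ε, hε, hqpos⟩ := Metric.eventually_nhds_iff.1
      ((hq x hx₁).continuousAt.eventually (lt_mem_nhds (hq₁.trans_le hqx)))
    filter_upwards [Ioo_mem_nhdsGT (show x < x + ε by linarith)] with y hy
    have hxy : ∀ z ∈ Icc x y, z ∈ Ici t₁ := fun z hz => hx₁.trans hz.1
    have hpmono : MonotoneOn p (Icc x y) :=
      monotoneOn_of_forall_hasDerivWithinAt (convex_Icc x y)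
        (fun z hz => (hp z (hxy z hz)).hasDerivWithinAt) fun z hz => by
          rw [interior_Icc] at hz
          refine (hqpos ?_).le
          rw [Real.dist_eq, abs_lt]
          constructor <;> linarith [hz.1, hz.2, hy.2]
    have hpz : ∀ z ∈ Icc x y, α ≤ p z := fun z hz =>
      hpx.trans (hpmono ⟨le_rfl, hy.1.le⟩ hz hz.1)
    have hqmono : MonotoneOn q (Icc x y) :=
      monotoneOn_of_forall_hasDerivWithinAt (convex_Icc x y)
        (fun z hz => (hq z (hxy z hz)).hasDerivWithinAt) fun z hz =>
          hr z (hxy z (interior_subset hz)) (hpz z (interior_subset hz))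
    exact ⟨hqx.trans (hqmono ⟨le_rfl, hy.1.le⟩ ⟨hy.1.le, le_rfl⟩ hy.1.le),
      hpz y ⟨hy.1.le, le_rfl⟩⟩

theorem add_mul_sub_le_of_deriv_nonneg_above {p q r : ℝ → ℝ} {α t₁ t : ℝ}
    (hp : ∀ x ∈ Ici t₁, HasDerivAt p (q x) x) (hq : ∀ x ∈ Ici t₁, HasDerivAt q (r x) x)
    (hr : ∀ x ∈ Ici t₁, α ≤ p x → 0 ≤ r x) (hα : α ≤ p t₁) (hq₁ : 0 < q t₁) (ht : t₁ ≤ t) :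
    p t₁ + q t₁ * (t - t₁) ≤ p t := by
  have hmono : MonotoneOn (fun x => p x - q t₁ * x) (Icc t₁ t) :=
    monotoneOn_of_forall_hasDerivWithinAt (convex_Icc t₁ t)
      (fun x hx => ((hp x hx.1).sub ((hasDerivAt_id x).const_mul (q t₁))).hasDerivWithinAt)
      fun x hx => by
        have := (Icc_subset_of_deriv_nonneg_above hp hq hr hα hq₁ t (interior_subset hx)).1
        simp only [mul_one]
        linarith
  have := hmono ⟨le_rfl, ht⟩ ⟨ht, le_rfl⟩ ht
  simp only at this
  linarith

theorem sturm_comparison_sin {u q r : ℝ → ℝ} {x₀ x₁ ω : ℝ} (hω : 0 < ω)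
    (hx₁ : ω * (x₁ - x₀) = Real.pi)
    (hu : ∀ t ∈ Icc x₀ x₁, HasDerivWithinAt u (q t) (Icc x₀ x₁) t)
    (hq : ∀ t ∈ Icc x₀ x₁, HasDerivWithinAt q (r t) (Icc x₀ x₁) t)
    (hr : ∀ t ∈ Ioo x₀ x₁, r t ≤ -(ω ^ 2 * u t)) (h₀ : u x₀ = 0) : u x₁ ≤ 0 := by
  set W := fun t => q t * Real.sin (ω * (t - x₀)) - ω * u t * Real.cos (ω * (t - x₀))
  have hθ : ∀ t, HasDerivAt (fun t => ω * (t - x₀)) ω t := fun t => by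
    simpa using ((hasDerivAt_id t).sub_const x₀).const_mul ω
  -- `W' = (r + ω² u) sin (ω (t - x₀)) ≤ 0`
  have hW : AntitoneOn W (Icc x₀ x₁) :=
    antitoneOn_of_forall_hasDerivWithinAt (convex_Icc _ _)
      (fun t ht => ((hq t ht).mul (hθ t).sin.hasDerivWithinAt).sub
        (((hu t ht).const_mul ω).mul (hθ t).cos.hasDerivWithinAt))
      fun t ht => by
        rw [interior_Icc] at ht
        have hsin : 0 ≤ Real.sin (ω * (t - x₀)) := Real.sin_nonneg_of_nonneg_of_le_pi
          (mul_nonneg hω.le (by linarith [ht.1]))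
          (hx₁ ▸ mul_le_mul_of_nonneg_left (by linarith [ht.2]) hω.le)
        have key : r t * Real.sin (ω * (t - x₀)) + q t * (Real.cos (ω * (t - x₀)) * ω) -
            (ω * q t * Real.cos (ω * (t - x₀)) + ω * u t * (-Real.sin (ω * (t - x₀)) * ω)) =
            (r t + ω ^ 2 * u t) * Real.sin (ω * (t - x₀)) := by ring
        rw [key]
        exact mul_nonpos_of_nonpos_of_nonneg (by linarith [hr t ht]) hsin
  have hx₀x₁ : x₀ ≤ x₁ := by nlinarith [Real.pi_pos]
  have := hW (left_mem_Icc.2 hx₀x₁) (right_mem_Icc.2 hx₀x₁) hx₀x₁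
  simp only [W, sub_self, mul_zero, Real.sin_zero, Real.cos_zero, h₀, hx₁, Real.sin_pi,
    Real.cos_pi] at this
  nlinarith

theorem exists_pos_of_hasDerivWithinAt_Ici {x₀ : ℝ}
    (hg : ∀ s ∈ Ici x₀, HasDerivWithinAt g (g' s) (Ici x₀) s)
    (hg' : ContinuousWithinAt g' (Ici x₀) x₀) (h₀ : g x₀ = 0) (hpos : 0 < g' x₀) :
    ∃ e > x₀, ∀ s ∈ Ioc x₀ e, 0 < g s := by
  obtain ⟨e, he, hsub⟩ := mem_nhdsGE_iff_exists_Ico_subset.1 (hg'.eventually (lt_mem_nhds hpos))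
  refine ⟨(x₀ + e) / 2, by linarith [mem_Ioi.1 he], fun s hs => h₀ ▸ ?_⟩
  refine strictMonoOn_of_hasDerivWithinAt_pos (convex_Icc x₀ s)
    (fun y hy => (hg y hy.1).continuousWithinAt.mono Icc_subset_Ici_self)
    (fun y hy => (hg y (interior_subset hy).1).mono (interior_subset.trans Icc_subset_Ici_self))
    (fun y hy => ?_) (left_mem_Icc.2 hs.1.le) (right_mem_Icc.2 hs.1.le) hs.1
  rw [interior_Icc] at hy
  exact hsub ⟨hy.1.le, by linarith [hy.2, hs.2, mem_Ioi.1 he]⟩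

theorem exists_tendsto_of_monotoneOn_Ici {x₀ a : ℝ} (hg : MonotoneOn g (Ici x₀))
    (ha : ∀ t ∈ Ici x₀, g t ≤ a) :
    ∃ l ≤ a, Tendsto g atTop (𝓝 l) ∧ ∀ t ∈ Ici x₀, g t ≤ l := by
  have hmono : Monotone fun t => g (max t x₀) := fun s t hst =>
    hg (mem_Ici.2 (le_max_right _ _)) (mem_Ici.2 (le_max_right _ _)) (max_le_max hst le_rfl)
  have hbdd : BddAbove (range fun t => g (max t x₀)) :=
    ⟨a, by rintro _ ⟨t, rfl⟩; exact ha _ (mem_Ici.2 (le_max_right _ _))⟩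
  refine ⟨_, ciSup_le fun t => ha _ (mem_Ici.2 (le_max_right _ _)),
    (tendsto_atTop_ciSup hmono hbdd).congr' ?_, fun t ht => ?_⟩
  · filter_upwards [eventually_ge_atTop x₀] with t ht
    simp [max_eq_left ht]
  · simpa [max_eq_left (mem_Ici.1 ht)] using le_ciSup hbdd t

end Calculus

namespace Admissible

variable {L a : ℝ} {f : ℝ → ℝ → ℝ}

theorem exists_mem_Ico_eq (hf : Admissible L f a) (hL : 0 < L) (x : ℝ) :
    ∃ y ∈ Ico 0 L, ∀ u, f u x = f u y := by
  have hper : Function.Periodic (fun x u => f u x) L := fun x => funext fun u => hf.periodic u x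
  obtain ⟨y, hy, hxy⟩ := hper.exists_mem_Ico₀ hL x
  exact ⟨y, hy, fun u => congrFun hxy u⟩

theorem nonneg_of_le (hf : Admissible L f a) {u : ℝ} (hu : u ≤ a) (x : ℝ) : 0 ≤ f u x :=
  hf.zero_root x ▸ (hf.strict_anti x).antitone hu

theorem nonpos_of_ge (hf : Admissible L f a) {u : ℝ} (hu : a ≤ u) (x : ℝ) : f u x ≤ 0 :=
  hf.zero_root x ▸ (hf.strict_anti x).antitone hu

theorem continuous_right (hf : Admissible L f a) (u : ℝ) : Continuous (f u) :=
  hf.smooth.continuous.comp (continuous_const.prodMk continuous_id)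

theorem exists_pos_le (hf : Admissible L f a) (hL : 0 < L) {c : ℝ} (hc : c < a) :
    ∃ m > 0, ∀ u ≤ c, ∀ x, m ≤ f u x := by
  obtain ⟨x₁, -, hmin⟩ := isCompact_Icc.exists_isMinOn (nonempty_Icc.2 hL.le)
    (hf.continuous_right c).continuousOn
  refine ⟨f c x₁, hf.zero_root x₁ ▸ hf.strict_anti x₁ hc, fun u hu x => ?_⟩
  obtain ⟨y, hy, hxy⟩ := hf.exists_mem_Ico_eq hL x
  rw [hxy]
  exact (hmin (Ico_subset_Icc_self hy)).trans ((hf.strict_anti y).antitone hu)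

theorem exists_lipschitzOnWith_mul (hf : Admissible L f a) (hL : 0 < L) (c : ℝ) :
    ∃ K, ∀ x, LipschitzOnWith K (fun u => u * f u x) (Icc 0 c) := by
  have hg : ContDiff ℝ 1 fun p : ℝ × ℝ => p.1 * f p.1 p.2 := contDiff_fst.mul hf.smooth
  obtain ⟨K, hK⟩ := hg.contDiffOn.exists_lipschitzOnWith one_ne_zero
    ((convex_Icc 0 c).prod (convex_Icc 0 L)) (isCompact_Icc.prod isCompact_Icc)
  refine ⟨K, fun x => LipschitzOnWith.of_dist_le_mul fun u hu u' hu' => ?_⟩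
  obtain ⟨y, hy, hxy⟩ := hf.exists_mem_Ico_eq hL x
  have hy' := Ico_subset_Icc_self hy
  simpa [hxy, Prod.dist_eq] using hK.dist_le_mul (u, y) ⟨hu, hy'⟩ (u', y) ⟨hu', hy'⟩

end Admissible

namespace DuLin

variable {L a c x₀ : ℝ} {f : ℝ → ℝ → ℝ} {γ γ₁ γ₂ : ℝ → ℝ × ℝ}

def clip (c u : ℝ) : ℝ := max (min u c) 0

/-- The reaction `u f(u, x)`, frozen outside `u ∈ [0, c]` so as to be globally Lipschitz. -/
def reaction (f : ℝ → ℝ → ℝ) (c u x : ℝ) : ℝ := clip c u * f (clip c u) x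

/-- The first-order system `(u, u')' = (u', -u f(u, x))` for `-u'' = u f(u, x)`, with the
truncated reaction. -/
def field (f : ℝ → ℝ → ℝ) (c x : ℝ) (p : ℝ × ℝ) : ℝ × ℝ := (p.2, -reaction f c p.1 x)

theorem clip_of_mem {u : ℝ} (hu : u ∈ Icc 0 c) : clip c u = u := by
  simp [clip, hu.1, hu.2]

theorem clip_mem (hc : 0 ≤ c) (u : ℝ) : clip c u ∈ Icc 0 c :=
  ⟨le_max_right _ _, max_le (min_le_right _ _) hc⟩

theorem lipschitzWith_clip (c : ℝ) : LipschitzWith 1 (clip c) :=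
  (LipschitzWith.id.min_const c).max_const 0

theorem reaction_of_mem {u : ℝ} (hu : u ∈ Icc 0 c) (x : ℝ) : reaction f c u x = u * f u x := by
  rw [reaction, clip_of_mem hu]

theorem reaction_zero (x : ℝ) : reaction f c 0 x = 0 := by
  simp [reaction, clip]

theorem reaction_nonpos (hf : Admissible L f a) (hac : a ≤ c) {u : ℝ} (hu : a ≤ u) (x : ℝ) :
    reaction f c u x ≤ 0 := by
  have hclip : a ≤ clip c u := (le_min hu hac).trans (le_max_left _ _)
  exact mul_nonpos_of_nonneg_of_nonpos (le_max_right _ _) (hf.nonpos_of_ge hclip x)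

theorem exists_lipschitzWith_reaction (hf : Admissible L f a) (hL : 0 < L) (hc : 0 ≤ c) :
    ∃ K, ∀ x, LipschitzWith K (reaction f c · x) := by
  obtain ⟨K, hK⟩ := hf.exists_lipschitzOnWith_mul hL c
  refine ⟨K, fun x => LipschitzWith.of_dist_le_mul fun u u' => ?_⟩
  calc dist (reaction f c u x) (reaction f c u' x) ≤ K * dist (clip c u) (clip c u') :=
        (hK x).dist_le_mul _ (clip_mem hc u) _ (clip_mem hc u')
    _ ≤ K * dist u u' := by
        gcongr
        simpa using (lipschitzWith_clip c).dist_le_mul u u'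

theorem exists_abs_reaction_le (hf : Admissible L f a) (hL : 0 < L) (hc : 0 ≤ c) :
    ∃ C, ∀ u x, |reaction f c u x| ≤ C := by
  obtain ⟨K, hK⟩ := hf.exists_lipschitzOnWith_mul hL c
  refine ⟨K * c, fun u x => ?_⟩
  have hu := clip_mem hc u
  have h := (hK x).dist_le_mul _ hu 0 ⟨le_rfl, hc⟩
  simp only [Real.dist_eq, zero_mul, sub_zero, abs_of_nonneg hu.1] at h
  exact h.trans (by gcongr; exact hu.2)

theorem exists_lipschitzWith_field (hf : Admissible L f a) (hL : 0 < L) (hc : 0 ≤ c) :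
    ∃ K, ∀ x, LipschitzWith K (field f c x) := by
  obtain ⟨K, hK⟩ := exists_lipschitzWith_reaction hf hL hc
  exact ⟨_, fun x => LipschitzWith.prod_snd.prodMk ((hK x).comp LipschitzWith.prod_fst).neg⟩

theorem continuous_field_apply (hf : Admissible L f a) (p : ℝ × ℝ) :
    Continuous fun x => field f c x p :=
  continuous_const.prodMk ((hf.continuous_right _).const_mul _).neg

theorem exists_isIntegralCurveOn_field (hf : Admissible L f a) (hL : 0 < L) (hc : 0 ≤ c)
    (x₀ : ℝ) (p : ℝ × ℝ) : ∃ γ, γ x₀ = p ∧ IsIntegralCurveOn γ (field f c) (Ici x₀) := by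
  obtain ⟨K, hK⟩ := exists_lipschitzWith_field hf hL hc
  exact exists_isIntegralCurveOn_Ici hK (continuous_field_apply hf) x₀ p

section Trajectory

variable (hγ : IsIntegralCurveOn γ (field f c) (Ici x₀))
include hγ

theorem hasDerivWithinAt_fst {t : ℝ} (ht : t ∈ Ici x₀) :
    HasDerivWithinAt (fun s => (γ s).1) (γ t).2 (Ici x₀) t :=
  (ContinuousLinearMap.fst ℝ ℝ ℝ).hasFDerivAt.comp_hasDerivWithinAt t (hγ t ht)

theorem hasDerivWithinAt_snd {t : ℝ} (ht : t ∈ Ici x₀) :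
    HasDerivWithinAt (fun s => (γ s).2) (-reaction f c (γ t).1 t) (Ici x₀) t :=
  (ContinuousLinearMap.snd ℝ ℝ ℝ).hasFDerivAt.comp_hasDerivWithinAt t (hγ t ht)

theorem hasDerivAt_fst {t : ℝ} (ht : x₀ < t) : HasDerivAt (fun s => (γ s).1) (γ t).2 t :=
  (hasDerivWithinAt_fst hγ ht.le).hasDerivAt (Ici_mem_nhds ht)

theorem hasDerivAt_snd {t : ℝ} (ht : x₀ < t) :
    HasDerivAt (fun s => (γ s).2) (-reaction f c (γ t).1 t) t :=
  (hasDerivWithinAt_snd hγ ht.le).hasDerivAt (Ici_mem_nhds ht)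

theorem continuousOn_fst : ContinuousOn (fun s => (γ s).1) (Ici x₀) :=
  continuous_fst.comp_continuousOn hγ.continuousOn

theorem continuousOn_snd : ContinuousOn (fun s => (γ s).2) (Ici x₀) :=
  continuous_snd.comp_continuousOn hγ.continuousOn

theorem eqOn_of_eq (hf : Admissible L f a) (hL : 0 < L) (hc : 0 ≤ c)
    (hγ₂ : IsIntegralCurveOn γ₂ (field f c) (Ici x₀)) {t : ℝ} (ht : x₀ ≤ t) (heq : γ t = γ₂ t) :
    EqOn γ γ₂ (Ici x₀) := by
  obtain ⟨K, hK⟩ := exists_lipschitzWith_field hf hL hc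
  exact hγ.eqOn_Ici hK hγ₂ ht heq

end Trajectory

theorem isIntegralCurveOn_zero (s : Set ℝ) :
    IsIntegralCurveOn (fun _ => (0 : ℝ × ℝ)) (field f c) s := fun t _ => by
  rw [show field f c t 0 = 0 by simp [field, reaction_zero]]
  exact hasDerivWithinAt_const t s _

theorem isIntegralCurveOn_zero_root (hf : Admissible L f a) (hac : a ≤ c) (s : Set ℝ) :
    IsIntegralCurveOn (fun _ => ((a, 0) : ℝ × ℝ)) (field f c) s := fun t _ => by
  rw [show field f c t (a, 0) = 0 by
    simp [field, reaction_of_mem ⟨hf.zero_pos.le, hac⟩, hf.zero_root]]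
  exact hasDerivWithinAt_const t s _

section Growth

variable (hf : Admissible L f a) (hL : 0 < L) (hac : a ≤ c)
  (hγ : IsIntegralCurveOn γ (field f c) (Ici x₀))
include hf hL hac hγ

/-- Crossing the zero `a` of `f` is transversal, because `(a, 0)` is a stationary point; above `a`
the solution is convex. -/
theorem exists_add_mul_sub_le_fst (h₀ : (γ x₀).1 = 0) {t₁ : ℝ} (ht₁ : x₀ ≤ t₁)
    (hgt : a < (γ t₁).1) : ∃ tc ∈ Ioc x₀ t₁, ∃ s > 0, ∀ t ≥ tc, a + s * (t - tc) ≤ (γ t).1 := by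
  have hc : 0 ≤ c := hf.zero_pos.le.trans hac
  obtain ⟨tc, htc, hutc, hbefore⟩ := exists_first_ge ht₁
    ((continuousOn_fst hγ).mono Icc_subset_Ici_self) (h₀ ▸ hf.zero_pos) hgt.le
  have hq : 0 ≤ (γ tc).2 := (hasDerivAt_fst hγ htc.1).nonneg_of_le_of_left htc.1
    fun y hy => hutc ▸ (hbefore y ⟨hy.1.le, hy.2⟩).le
  have hq' : (γ tc).2 ≠ 0 := fun h0 => by
    have := eqOn_of_eq hγ hf hL hc (isIntegralCurveOn_zero_root hf hac _) htc.1.le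
      (Prod.ext hutc h0) (self_mem_Ici (a := x₀))
    have ha := hf.zero_pos
    simp only [Prod.ext_iff, h₀] at this
    linarith [this.1]
  refine ⟨tc, htc, _, hq.lt_of_ne' hq', fun t ht => hutc ▸ ?_⟩
  exact add_mul_sub_le_of_deriv_nonneg_above (fun x hx => hasDerivAt_fst hγ (htc.1.trans_le hx))
    (fun x hx => hasDerivAt_snd hγ (htc.1.trans_le hx))
    (fun x _ hax => neg_nonneg.2 (reaction_nonpos hf hac hax x)) hutc.ge (hq.lt_of_ne' hq') ht

theorem fst_pos_of_fst_gt (h₀ : (γ x₀).1 = 0) {t₁ : ℝ} (ht₁ : x₀ < t₁)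
    (hpos : ∀ t ∈ Ioc x₀ t₁, 0 < (γ t).1) (hgt : a < (γ t₁).1) : ∀ t ∈ Ioi x₀, 0 < (γ t).1 := by
  obtain ⟨tc, htc, s, hs, hlin⟩ := exists_add_mul_sub_le_fst hf hL hac hγ h₀ ht₁.le hgt
  intro t ht
  rcases le_or_gt tc t with h | h
  · nlinarith [hlin t h, hf.zero_pos]
  · exact hpos t ⟨ht, h.le.trans htc.2⟩

end Growth

theorem fst_pos_of_nonneg (hf : Admissible L f a) (hL : 0 < L) (hc : 0 ≤ c)
    (hγ : IsIntegralCurveOn γ (field f c) (Ici x₀)) {b : ℝ} (h₀ : γ x₀ = (0, b)) (hb : b ≠ 0)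
    (hnn : ∀ t ∈ Ici x₀, 0 ≤ (γ t).1) : ∀ t ∈ Ioi x₀, 0 < (γ t).1 := by
  intro t ht
  refine (hnn t (Ioi_subset_Ici_self ht)).lt_of_ne fun h => hb ?_
  -- an interior zero of a nonnegative solution is a double zero
  have hmin : IsLocalMin (fun s => (γ s).1) t :=
    mem_of_superset (Ioi_mem_nhds ht) fun s hs =>
      show (γ t).1 ≤ (γ s).1 from h ▸ hnn s (Ioi_subset_Ici_self hs)
  have hq := hmin.hasDerivAt_eq_zero (hasDerivAt_fst hγ ht)
  have := eqOn_of_eq hγ hf hL hc (isIntegralCurveOn_zero _) (Ioi_subset_Ici_self ht)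
    (Prod.ext h.symm hq) (self_mem_Ici (a := x₀))
  rw [h₀] at this
  exact congrArg Prod.snd this

/-- Along these trajectories the truncation of the reaction is inactive. -/
structure IsPosSol (f : ℝ → ℝ → ℝ) (a x₀ : ℝ) (γ : ℝ → ℝ × ℝ) : Prop where
  isIntegralCurveOn : IsIntegralCurveOn γ (field f a) (Ici x₀)
  fst_x₀ : (γ x₀).1 = 0
  pos : ∀ t ∈ Ioi x₀, 0 < (γ t).1
  le : ∀ t ∈ Ici x₀, (γ t).1 ≤ a

namespace IsPosSol

theorem nonneg (hγ : IsPosSol f a x₀ γ) {t : ℝ} (ht : t ∈ Ici x₀) : 0 ≤ (γ t).1 :=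
  (mem_Ici.1 ht).eq_or_lt.elim (fun h => h ▸ hγ.fst_x₀.ge) fun h => (hγ.pos t h).le

theorem hasDerivWithinAt_snd (hγ : IsPosSol f a x₀ γ) {t : ℝ} (ht : t ∈ Ici x₀) :
    HasDerivWithinAt (fun s => (γ s).2) (-((γ t).1 * f (γ t).1 t)) (Ici x₀) t := by
  rw [← reaction_of_mem ⟨hγ.nonneg ht, hγ.le t ht⟩]
  exact DuLin.hasDerivWithinAt_snd hγ.isIntegralCurveOn ht

variable (hf : Admissible L f a)
include hf

theorem snd_nonneg (hγ : IsPosSol f a x₀ γ) {t : ℝ} (ht : t ∈ Ici x₀) : 0 ≤ (γ t).2 := by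
  have hanti : AntitoneOn (fun s => (γ s).2) (Ici x₀) :=
    antitoneOn_of_forall_hasDerivWithinAt (convex_Ici x₀) (fun s hs => hγ.hasDerivWithinAt_snd hs)
      fun s hs => neg_nonpos.2 (mul_nonneg (hγ.nonneg (interior_subset hs))
        (hf.nonneg_of_le (hγ.le s (interior_subset hs)) s))
  by_contra! hneg
  -- otherwise `u' ≤ u'(t) < 0` from `t` on, and `u` becomes negative
  set T := t + ((γ t).1 + 1) / -(γ t).2
  have hT : t ≤ T := le_add_of_nonneg_right
    (div_nonneg (by linarith [hγ.nonneg ht]) (neg_nonneg.2 hneg.le))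
  have hlin := le_add_mul_sub_of_forall_hasDerivWithinAt_le (g := fun s => (γ s).1)
    (fun s hs => (hasDerivWithinAt_fst hγ.isIntegralCurveOn (mem_Ici.2 (ht.trans hs))).mono
      (Ici_subset_Ici.2 ht))
    (fun s hs => hanti ht (mem_Ici.2 (ht.trans (le_of_lt hs))) (le_of_lt hs)) hT
  have hTt : (γ t).2 * (T - t) = -((γ t).1 + 1) := by
    have := hneg.ne
    simp only [T, add_sub_cancel_left]
    field_simp
  linarith [hγ.nonneg (mem_Ici.2 (ht.trans hT))]

theorem tendsto_fst (hL : 0 < L) (hγ : IsPosSol f a x₀ γ) :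
    Tendsto (fun t => (γ t).1) atTop (𝓝 a) := by
  have hmono : MonotoneOn (fun t => (γ t).1) (Ici x₀) :=
    monotoneOn_of_forall_hasDerivWithinAt (convex_Ici x₀)
      (fun t ht => hasDerivWithinAt_fst hγ.isIntegralCurveOn ht)
      fun t ht => hγ.snd_nonneg hf (interior_subset ht)
  obtain ⟨l, hla, hul, hle⟩ := exists_tendsto_of_monotoneOn_Ici hmono hγ.le
  have hl0 : 0 < l := (hγ.pos (x₀ + 1) (by simp)).trans_le (hle _ (by simp))
  rcases hla.eq_or_lt with rfl | hla
  · exact hul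
  exfalso
  -- if `l < a` then `u'' ≤ -l m / 2` eventually, contradicting `u' ≥ 0`
  obtain ⟨m, hm, hfm⟩ := hf.exists_pos_le hL hla
  obtain ⟨X, hX, hXx₀⟩ : ∃ X, l / 2 < (γ X).1 ∧ x₀ ≤ X :=
    ((hul.eventually (lt_mem_nhds (half_lt_self hl0))).and (eventually_ge_atTop x₀)).exists
  set κ := l / 2 * m
  have hκ : 0 < κ := by positivity
  set T := X + ((γ X).2 + 1) / κ
  have hT : X ≤ T := le_add_of_nonneg_right
    (div_nonneg (by linarith [hγ.snd_nonneg hf (mem_Ici.2 hXx₀)]) hκ.le)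
  have hlin := le_add_mul_sub_of_forall_hasDerivWithinAt_le (g := fun s => (γ s).2) (C := -κ)
    (fun s hs => (hγ.hasDerivWithinAt_snd (mem_Ici.2 (hXx₀.trans hs))).mono
      (Ici_subset_Ici.2 hXx₀))
    (fun s hs => by
      have hs' : s ∈ Ici x₀ := mem_Ici.2 (hXx₀.trans (le_of_lt hs))
      have h1 : l / 2 ≤ (γ s).1 := hX.le.trans (hmono (mem_Ici.2 hXx₀) hs' (le_of_lt hs))
      exact neg_le_neg (mul_le_mul h1 (hfm _ (hle s hs') s) hm.le (hγ.nonneg hs'))) hT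
  have hTX : κ * (T - X) = (γ X).2 + 1 := by
    simp only [T, add_sub_cancel_left]
    field_simp
  linarith [hγ.snd_nonneg hf (mem_Ici.2 (hXx₀.trans hT))]

end IsPosSol

def wronskian (γ₁ γ₂ : ℝ → ℝ × ℝ) (t : ℝ) : ℝ := (γ₂ t).2 * (γ₁ t).1 - (γ₁ t).2 * (γ₂ t).1

section Comparison

variable (hγ₁ : IsPosSol f a x₀ γ₁) (hγ₂ : IsPosSol f a x₀ γ₂)
include hγ₁ hγ₂

theorem hasDerivWithinAt_wronskian {t : ℝ} (ht : t ∈ Ici x₀) :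
    HasDerivWithinAt (wronskian γ₁ γ₂) ((γ₁ t).1 * (γ₂ t).1 * (f (γ₁ t).1 t - f (γ₂ t).1 t))
      (Ici x₀) t := by
  have := ((hγ₂.hasDerivWithinAt_snd ht).mul (hasDerivWithinAt_fst hγ₁.isIntegralCurveOn ht)).sub
    ((hγ₁.hasDerivWithinAt_snd ht).mul (hasDerivWithinAt_fst hγ₂.isIntegralCurveOn ht))
  exact this.congr_deriv (by ring)

theorem wronskian_pos (hf : Admissible L f a) {t : ℝ} (ht : x₀ < t)
    (hlt : ∀ s ∈ Ioo x₀ t, (γ₁ s).1 < (γ₂ s).1) : 0 < wronskian γ₁ γ₂ t := by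
  have hW := strictMonoOn_of_forall_hasDerivWithinAt (convex_Icc x₀ t)
    (fun s hs => (hasDerivWithinAt_wronskian hγ₁ hγ₂ hs.1).mono Icc_subset_Ici_self)
    fun s hs => by
      rw [interior_Icc] at hs
      exact mul_pos (mul_pos (hγ₁.pos s hs.1) (hγ₂.pos s hs.1))
        (sub_pos.2 (hf.strict_anti s (hlt s hs)))
  have := hW (left_mem_Icc.2 ht.le) (right_mem_Icc.2 ht.le) ht
  rwa [wronskian, hγ₁.fst_x₀, hγ₂.fst_x₀, mul_zero, mul_zero, sub_zero] at this

theorem fst_lt_fst (hf : Admissible L f a) (hb : (γ₁ x₀).2 < (γ₂ x₀).2) :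
    ∀ t ∈ Ioi x₀, (γ₁ t).1 < (γ₂ t).1 := by
  set d := fun s => (γ₂ s).1 - (γ₁ s).1
  have hd : ∀ s ∈ Ici x₀, HasDerivWithinAt d ((γ₂ s).2 - (γ₁ s).2) (Ici x₀) s := fun s hs =>
    (hasDerivWithinAt_fst hγ₂.isIntegralCurveOn hs).sub
      (hasDerivWithinAt_fst hγ₁.isIntegralCurveOn hs)
  obtain ⟨e, he, hepos⟩ := exists_pos_of_hasDerivWithinAt_Ici hd
    (((continuousOn_snd hγ₂.isIntegralCurveOn).sub (continuousOn_snd hγ₁.isIntegralCurveOn))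
      x₀ self_mem_Ici) (by simp [d, hγ₁.fst_x₀, hγ₂.fst_x₀]) (sub_pos.2 hb)
  intro t ht
  by_contra! hle
  have het : e < t := not_le.1 fun h => (hepos t ⟨ht, h⟩).not_ge (sub_nonpos.2 hle)
  have hdc : ContinuousOn (fun s => -d s) (Icc e t) :=
    (((continuousOn_fst hγ₂.isIntegralCurveOn).sub
      (continuousOn_fst hγ₁.isIntegralCurveOn)).neg).mono fun s hs => (he.trans_le hs.1).le
  obtain ⟨t₁, ht₁, hdt₁, hbefore⟩ := exists_first_ge het.le hdc
    (neg_neg_of_pos (hepos e ⟨he, le_rfl⟩)) (by simpa [d] using hle)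
  have hx₀t₁ : x₀ < t₁ := he.trans ht₁.1
  have hlt : ∀ s ∈ Ioo x₀ t₁, (γ₁ s).1 < (γ₂ s).1 := fun s hs => by
    rcases le_or_gt s e with h | h
    · exact sub_pos.1 (hepos s ⟨hs.1, h⟩)
    · exact sub_pos.1 (neg_neg_iff_pos.1 (hbefore s ⟨h.le, hs.2⟩))
  -- at the first contact `t₁`, `W = u₁ (u₂' - u₁') ≤ 0`, although `W` increases from `W x₀ = 0`
  have hd' : 0 ≤ -((γ₂ t₁).2 - (γ₁ t₁).2) :=
    ((hd t₁ (le_of_lt hx₀t₁)).hasDerivAt (Ici_mem_nhds hx₀t₁)).neg.nonneg_of_le_of_left ht₁.1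
      fun y hy => (hbefore y ⟨hy.1.le, hy.2⟩).le.trans hdt₁.ge
  have hW : wronskian γ₁ γ₂ t₁ = (γ₁ t₁).1 * ((γ₂ t₁).2 - (γ₁ t₁).2) := by
    have : (γ₂ t₁).1 = (γ₁ t₁).1 := by simp only [d] at hdt₁; linarith
    rw [wronskian, this]
    ring
  have := wronskian_pos hγ₁ hγ₂ hf hx₀t₁ hlt
  nlinarith [hγ₁.pos t₁ hx₀t₁]

theorem not_snd_lt_snd (hf : Admissible L f a) (hL : 0 < L) : ¬ (γ₁ x₀).2 < (γ₂ x₀).2 := by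
  intro hb
  have hlt := fst_lt_fst hγ₁ hγ₂ hf hb
  -- the ratio `u₂ / u₁` increases, since its derivative is the Wronskian over `u₁²`
  have hρ : MonotoneOn (fun t => (γ₂ t).1 / (γ₁ t).1) (Ioi x₀) :=
    monotoneOn_of_forall_hasDerivWithinAt (convex_Ioi x₀)
      (fun t ht => ((hasDerivAt_fst hγ₂.isIntegralCurveOn ht).div
        (hasDerivAt_fst hγ₁.isIntegralCurveOn ht) (hγ₁.pos t ht).ne').hasDerivWithinAt)
      fun t ht => by
        rw [interior_Ioi] at ht
        have hW := wronskian_pos hγ₁ hγ₂ hf ht fun s hs => hlt s hs.1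
        rw [wronskian] at hW
        exact div_nonneg (by linarith) (sq_nonneg _)
  set t₁ := x₀ + 1
  have ht₁ : t₁ ∈ Ioi x₀ := by simp [t₁]
  set ρ := (γ₂ t₁).1 / (γ₁ t₁).1
  have hρ1 : 1 < ρ := (one_lt_div (hγ₁.pos t₁ ht₁)).2 (hlt t₁ ht₁)
  have hbound : ∀ᶠ t in atTop, ρ * (γ₁ t).1 ≤ a := by
    filter_upwards [eventually_ge_atTop t₁] with t ht
    have ht' : t ∈ Ioi x₀ := lt_of_lt_of_le ht₁ ht
    have := hρ ht₁ ht' ht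
    rw [le_div_iff₀ (hγ₁.pos t ht')] at this
    exact this.trans (hγ₂.le t (Ioi_subset_Ici_self ht'))
  have := le_of_tendsto ((hγ₁.tendsto_fst hf hL).const_mul ρ) hbound
  nlinarith [hf.zero_pos]

end Comparison

theorem IsPosSol.eqOn (hf : Admissible L f a) (hL : 0 < L) (hγ₁ : IsPosSol f a x₀ γ₁)
    (hγ₂ : IsPosSol f a x₀ γ₂) : EqOn γ₁ γ₂ (Ici x₀) :=
  eqOn_of_eq hγ₁.isIntegralCurveOn hf hL hf.zero_pos.le hγ₂.isIntegralCurveOn le_rfl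
    (Prod.ext (hγ₁.fst_x₀.trans hγ₂.fst_x₀.symm) (le_antisymm
      (not_lt.1 (not_snd_lt_snd hγ₂ hγ₁ hf hL)) (not_lt.1 (not_snd_lt_snd hγ₁ hγ₂ hf hL))))

theorem IsPosSol.isDuLin (hγ : IsPosSol f a x₀ γ) (hf : Admissible L f a) :
    IsDuLin x₀ f fun t => (γ t).1 := by
  have hd1 : ∀ t ∈ Ici x₀, derivWithin (fun s => (γ s).1) (Ici x₀) t = (γ t).2 := fun t ht =>
    (hasDerivWithinAt_fst hγ.isIntegralCurveOn ht).derivWithin (uniqueDiffOn_Ici x₀ t ht)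
  have hd2 : ∀ t ∈ Ici x₀, HasDerivWithinAt (derivWithin (fun s => (γ s).1) (Ici x₀))
      (-((γ t).1 * f (γ t).1 t)) (Ici x₀) t := fun t ht =>
    (hγ.hasDerivWithinAt_snd ht).congr_of_mem hd1 ht
  have hd2' : ∀ t ∈ Ici x₀, derivWithin (derivWithin (fun s => (γ s).1) (Ici x₀)) (Ici x₀) t =
      -((γ t).1 * f (γ t).1 t) := fun t ht =>
    (hd2 t ht).derivWithin (uniqueDiffOn_Ici x₀ t ht)
  have hu := continuousOn_fst hγ.isIntegralCurveOn
  refine ⟨fun t ht => (hasDerivWithinAt_fst hγ.isIntegralCurveOn ht).differentiableWithinAt,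
    fun t ht => (hd2 t ht).differentiableWithinAt,
    ContinuousOn.congr (hu.mul (hf.smooth.continuous.comp_continuousOn
      (hu.prodMk continuousOn_id))).neg hd2',
    ⟨a, fun t ht => abs_le.2 ⟨by linarith [hγ.nonneg ht, hf.zero_pos], hγ.le t ht⟩⟩,
    fun t ht => hγ.nonneg ht, ⟨x₀ + 1, by simp, (hγ.pos _ (by simp)).ne'⟩, hγ.fst_x₀,
    fun t ht => by rw [hd2' t (Ioi_subset_Ici_self ht), neg_neg]⟩

section Shooting

def shot (hf : Admissible L f a) (hL : 0 < L) (x₀ b : ℝ) : ℝ → ℝ × ℝ :=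
  (exists_isIntegralCurveOn_field hf hL hf.zero_pos.le x₀ (0, b)).choose

def crossingSlopes (hf : Admissible L f a) (hL : 0 < L) (x₀ : ℝ) : Set ℝ :=
  {b | 0 < b ∧ ∃ t ∈ Ioi x₀, (shot hf hL x₀ b t).1 < 0}

variable (hf : Admissible L f a) (hL : 0 < L)

theorem shot_x₀ (b : ℝ) : shot hf hL x₀ b x₀ = (0, b) :=
  (exists_isIntegralCurveOn_field hf hL hf.zero_pos.le x₀ (0, b)).choose_spec.1

theorem isIntegralCurveOn_shot (b : ℝ) :
    IsIntegralCurveOn (shot hf hL x₀ b) (field f a) (Ici x₀) :=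
  (exists_isIntegralCurveOn_field hf hL hf.zero_pos.le x₀ (0, b)).choose_spec.2

theorem exists_abs_fst_shot_sub_le : ∃ K ≥ 0, ∀ b b' t, x₀ ≤ t →
    |(shot hf hL x₀ b t).1 - (shot hf hL x₀ b' t).1| ≤ |b - b'| * Real.exp (K * (t - x₀)) := by
  obtain ⟨K, hK⟩ := exists_lipschitzWith_field hf hL hf.zero_pos.le
  refine ⟨K, K.coe_nonneg, fun b b' t ht => ?_⟩
  have := (isIntegralCurveOn_shot hf hL b).dist_le_Ici hK (isIntegralCurveOn_shot hf hL b') ht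
  rw [shot_x₀, shot_x₀, Prod.dist_eq, Prod.dist_eq] at this
  simpa [Real.dist_eq] using (le_max_left _ _).trans this

theorem exists_abs_fst_shot_le : ∃ K ≥ 0, ∀ b t, x₀ ≤ t →
    |(shot hf hL x₀ b t).1| ≤ |b| * Real.exp (K * (t - x₀)) := by
  obtain ⟨K, hK0, hK⟩ := exists_abs_fst_shot_sub_le hf hL (x₀ := x₀)
  refine ⟨K, hK0, fun b t ht => ?_⟩
  have h0 : shot hf hL x₀ 0 t = 0 := eqOn_of_eq (isIntegralCurveOn_shot hf hL 0) hf hL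
    hf.zero_pos.le (isIntegralCurveOn_zero _) le_rfl (by simp [shot_x₀]) ht
  simpa [h0] using hK b 0 t ht

theorem continuous_fst_shot {t : ℝ} (ht : x₀ ≤ t) :
    Continuous fun b => (shot hf hL x₀ b t).1 := by
  obtain ⟨K, -, hK⟩ := exists_abs_fst_shot_sub_le hf hL (x₀ := x₀)
  refine (LipschitzWith.of_dist_le_mul (K := ⟨_, (Real.exp_pos (K * (t - x₀))).le⟩)
    fun b b' => ?_).continuous
  rw [Real.dist_eq, Real.dist_eq, mul_comm]
  exact hK b b' t ht

theorem exists_fst_shot_ge : ∃ C > 0, ∀ b t, x₀ ≤ t →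
    b * (t - x₀) - C * (t - x₀) ^ 2 ≤ (shot hf hL x₀ b t).1 := by
  obtain ⟨C, hC⟩ := exists_abs_reaction_le hf hL hf.zero_pos.le
  refine ⟨max C 1, by positivity, fun b t ht => ?_⟩
  have hγ := isIntegralCurveOn_shot hf hL (x₀ := x₀) b
  have hq : ∀ s ∈ Ici x₀, b - C * (s - x₀) ≤ (shot hf hL x₀ b s).2 := fun s hs => by
    have := le_add_mul_sub_of_forall_hasDerivWithinAt_le (g := fun s => -(shot hf hL x₀ b s).2)
      (C := C) (fun y hy => (hasDerivWithinAt_snd hγ hy).neg)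
      (fun y _ => by simpa using (le_abs_self _).trans (hC _ y)) hs
    simp only [shot_x₀] at this
    linarith
  have hmono : MonotoneOn
      (fun s => (shot hf hL x₀ b s).1 - b * (s - x₀) + max C 1 * (s - x₀) ^ 2) (Ici x₀) :=
    monotoneOn_of_forall_hasDerivWithinAt (convex_Ici x₀)
      (fun s hs => ((hasDerivWithinAt_fst hγ hs).sub
        ((((hasDerivAt_id s).sub_const x₀).const_mul b).hasDerivWithinAt)).add
        ((((hasDerivAt_id s).sub_const x₀).pow 2).const_mul (max C 1)).hasDerivWithinAt)
      fun s hs => by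
        rw [interior_Ici] at hs
        have h1 := hq s (Ioi_subset_Ici_self hs)
        have h2 : 0 ≤ s - x₀ := by linarith [mem_Ioi.1 hs]
        have h3 : C ≤ 2 * max C 1 := by linarith [le_max_left C 1, le_max_right C 1]
        norm_num
        nlinarith [mul_le_mul_of_nonneg_right h3 h2]
  have := hmono self_mem_Ici (mem_Ici.2 ht) ht
  simp only [shot_x₀, sub_self, mul_zero, ne_eq, OfNat.ofNat_ne_zero, not_false_eq_true,
    zero_pow, add_zero] at this
  linarith

theorem isOpen_crossingSlopes : IsOpen (crossingSlopes hf hL x₀) := by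
  have : crossingSlopes hf hL x₀ =
      Ioi 0 ∩ ⋃ t ∈ Ioi x₀, (fun b => (shot hf hL x₀ b t).1) ⁻¹' Iio 0 := by
    ext b
    simp [crossingSlopes]
  rw [this]
  exact isOpen_Ioi.inter (isOpen_biUnion fun t ht =>
    isOpen_Iio.preimage (continuous_fst_shot hf hL (le_of_lt ht)))

theorem bddAbove_crossingSlopes : BddAbove (crossingSlopes hf hL x₀) := by
  obtain ⟨C, hC, hge⟩ := exists_fst_shot_ge hf hL (x₀ := x₀)
  refine ⟨C + a + 1, fun b ⟨_, t, ht, hneg⟩ => ?_⟩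
  by_contra! hb
  have hpos : ∀ s ∈ Ioc x₀ (x₀ + 1), 0 < (shot hf hL x₀ b s).1 := fun s hs => by
    have := hge b s (le_of_lt hs.1)
    have h1 : 0 < s - x₀ := by linarith [hs.1]
    have h2 : C * (s - x₀) ≤ C := mul_le_of_le_one_right hC.le (by linarith [hs.2])
    nlinarith [mul_pos h1 (show 0 < b - C * (s - x₀) by linarith [hf.zero_pos])]
  have hgt : a < (shot hf hL x₀ b (x₀ + 1)).1 := by
    have := hge b (x₀ + 1) (by linarith)
    simp only [add_sub_cancel_left, one_pow, mul_one] at this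
    linarith
  exact (fst_pos_of_fst_gt hf hL le_rfl (isIntegralCurveOn_shot hf hL b)
    (by rw [shot_x₀]) (lt_add_one x₀) hpos hgt t ht).not_gt hneg

theorem crossingSlopes_nonempty : (crossingSlopes hf hL x₀).Nonempty := by
  obtain ⟨m, hm, hfm⟩ := hf.exists_pos_le hL (half_lt_self hf.zero_pos)
  obtain ⟨K, hK0, hK⟩ := exists_abs_fst_shot_le hf hL (x₀ := x₀)
  set ω := √m
  have hω : 0 < ω := Real.sqrt_pos.2 hm
  set x₁ := x₀ + Real.pi / ω
  have hx₁ : x₀ < x₁ := lt_add_of_pos_right _ (div_pos Real.pi_pos hω)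
  set b := a / 2 / Real.exp (K * (Real.pi / ω))
  have hb : 0 < b := div_pos (half_pos hf.zero_pos) (Real.exp_pos _)
  refine ⟨b, hb, ?_⟩
  by_contra! hnn
  set γ := shot hf hL x₀ b
  have hγ := isIntegralCurveOn_shot hf hL (x₀ := x₀) b
  have hnn' : ∀ t ∈ Ici x₀, 0 ≤ (γ t).1 := fun t ht =>
    (mem_Ici.1 ht).eq_or_lt.elim (fun h => by simp [γ, ← h, shot_x₀]) (hnn t)
  have hsmall : ∀ t ∈ Icc x₀ x₁, (γ t).1 ≤ a / 2 := fun t ht => by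
    calc (γ t).1 ≤ b * Real.exp (K * (t - x₀)) :=
          (le_abs_self _).trans ((hK b t ht.1).trans_eq (by rw [abs_of_pos hb]))
      _ ≤ b * Real.exp (K * (Real.pi / ω)) := by
          gcongr
          linarith [ht.2]
      _ = a / 2 := div_mul_cancel₀ _ (Real.exp_pos _).ne'
  have hsturm := sturm_comparison_sin (u := fun t => (γ t).1) (q := fun t => (γ t).2)
    (r := fun t => -reaction f a (γ t).1 t) (x₁ := x₁) hω
    (by rw [show x₁ - x₀ = Real.pi / ω by simp [x₁]]; field_simp)
    (fun t ht => (hasDerivWithinAt_fst hγ ht.1).mono Icc_subset_Ici_self)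
    (fun t ht => (hasDerivWithinAt_snd hγ ht.1).mono Icc_subset_Ici_self)
    (fun t ht => by
      have h0 := hnn' t (mem_Ici.2 (le_of_lt ht.1))
      have h1 := hsmall t (Ioo_subset_Icc_self ht)
      rw [reaction_of_mem ⟨h0, h1.trans (half_le_self hf.zero_pos.le)⟩, Real.sq_sqrt hm.le]
      nlinarith [hfm _ h1 t])
    (by simp [γ, shot_x₀])
  have := fst_pos_of_nonneg hf hL hf.zero_pos.le hγ (shot_x₀ hf hL b) hb.ne' hnn' x₁ hx₁
  linarith

theorem sSup_crossingSlopes_notMem : sSup (crossingSlopes hf hL x₀) ∉ crossingSlopes hf hL x₀ :=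
  fun h => by
    obtain ⟨ε, hε, hball⟩ := Metric.isOpen_iff.1 (isOpen_crossingSlopes hf hL) _ h
    have := le_csSup (bddAbove_crossingSlopes hf hL) (hball (show
      sSup (crossingSlopes hf hL x₀) + ε / 2 ∈ Metric.ball (sSup (crossingSlopes hf hL x₀)) ε by
        rw [Metric.mem_ball, Real.dist_eq, add_sub_cancel_left, abs_of_pos (half_pos hε)]
        exact half_lt_self hε))
    linarith

theorem sSup_crossingSlopes_pos : 0 < sSup (crossingSlopes hf hL x₀) := by
  obtain ⟨b, hb⟩ := crossingSlopes_nonempty hf hL (x₀ := x₀)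
  exact hb.1.trans_le (le_csSup (bddAbove_crossingSlopes hf hL) hb)

theorem fst_shot_sSup_nonneg {t : ℝ} (ht : t ∈ Ici x₀) :
    0 ≤ (shot hf hL x₀ (sSup (crossingSlopes hf hL x₀)) t).1 := by
  rcases (mem_Ici.1 ht).eq_or_lt with rfl | ht
  · simp [shot_x₀]
  · by_contra! hneg
    exact sSup_crossingSlopes_notMem hf hL ⟨sSup_crossingSlopes_pos hf hL, t, ht, hneg⟩

theorem eventually_fst_shot_pos {b₀ t₁ : ℝ} (hb₀ : 0 < b₀) (ht₁ : x₀ < t₁)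
    (hpos : ∀ t ∈ Ioc x₀ t₁, 0 < (shot hf hL x₀ b₀ t).1) :
    ∀ᶠ b in 𝓝 b₀, ∀ t ∈ Ioc x₀ t₁, 0 < (shot hf hL x₀ b t).1 := by
  obtain ⟨C, hC, hge⟩ := exists_fst_shot_ge hf hL (x₀ := x₀)
  obtain ⟨K, hK0, hK⟩ := exists_abs_fst_shot_sub_le hf hL (x₀ := x₀)
  -- on `(x₀, m₀)` positivity follows from `b > b₀ / 2`, and on `[m₀, t₁]` from `u_{b₀} ≥ ε`
  set m₀ := min (x₀ + b₀ / (2 * C)) t₁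
  have hm₀ : x₀ < m₀ := lt_min (lt_add_of_pos_right _ (by positivity)) ht₁
  obtain ⟨s₀, hs₀, hmin⟩ := isCompact_Icc.exists_isMinOn (nonempty_Icc.2 (min_le_right _ t₁))
    ((continuousOn_fst (isIntegralCurveOn_shot hf hL b₀)).mono fun s hs =>
      mem_Ici.2 (hm₀.le.trans hs.1))
  set ε := (shot hf hL x₀ b₀ s₀).1
  have hε : 0 < ε := hpos s₀ ⟨hm₀.trans_le hs₀.1, hs₀.2⟩
  set E := Real.exp (K * (t₁ - x₀))
  filter_upwards [lt_mem_nhds (half_lt_self hb₀),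
    Metric.ball_mem_nhds b₀ (div_pos hε (Real.exp_pos (K * (t₁ - x₀))))] with b hb hbε t ht
  rw [Metric.mem_ball, Real.dist_eq] at hbε
  rcases lt_or_ge t m₀ with h | h
  · have h1 : 0 < t - x₀ := by linarith [ht.1]
    have h2 : C * (t - x₀) < b₀ / 2 := by
      have h3 : t - x₀ < b₀ / (2 * C) := by linarith [h.trans_le (min_le_left _ _)]
      rw [lt_div_iff₀ (by positivity)] at h3
      linarith
    nlinarith [hge b t (le_of_lt ht.1), mul_pos h1 (show 0 < b - C * (t - x₀) by linarith)]
  · have h1 : ε ≤ (shot hf hL x₀ b₀ t).1 := hmin ⟨h, ht.2⟩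
    have h2 : |(shot hf hL x₀ b t).1 - (shot hf hL x₀ b₀ t).1| < ε :=
      (hK b b₀ t (le_of_lt ht.1)).trans_lt <| calc
        |b - b₀| * Real.exp (K * (t - x₀)) ≤ |b - b₀| * E := mul_le_mul_of_nonneg_left
            (Real.exp_le_exp.2 (mul_le_mul_of_nonneg_left (by linarith [ht.2]) hK0))
            (abs_nonneg _)
        _ < ε / E * E := mul_lt_mul_of_pos_right hbε (Real.exp_pos _)
        _ = ε := div_mul_cancel₀ _ (Real.exp_pos _).ne'
    linarith [(abs_lt.1 h2).1]

/-- If the extremal trajectory exceeded `a`, so would the trajectories of nearby slopes, which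
would then never become negative; but elements of `crossingSlopes` accumulate at its supremum. -/
theorem fst_shot_sSup_le {t₁ : ℝ} (ht₁ : t₁ ∈ Ici x₀) :
    (shot hf hL x₀ (sSup (crossingSlopes hf hL x₀)) t₁).1 ≤ a := by
  set bs := sSup (crossingSlopes hf hL x₀)
  have hbs := sSup_crossingSlopes_pos hf hL (x₀ := x₀)
  by_contra! hgt
  have hx₀t₁ : x₀ < t₁ := (mem_Ici.1 ht₁).lt_of_ne fun h => by
    simp [← h, shot_x₀] at hgt
    linarith [hf.zero_pos]
  have hpos : ∀ t ∈ Ioc x₀ t₁, 0 < (shot hf hL x₀ bs t).1 := fun t ht =>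
    fst_pos_of_nonneg hf hL hf.zero_pos.le (isIntegralCurveOn_shot hf hL bs) (shot_x₀ hf hL bs)
      hbs.ne' (fun _ hs => fst_shot_sSup_nonneg hf hL hs) t ht.1
  obtain ⟨b, ⟨hbpos, hbgt⟩, hb⟩ := mem_closure_iff_nhds.1
    (csSup_mem_closure (crossingSlopes_nonempty hf hL) (bddAbove_crossingSlopes hf hL)) _
    ((eventually_fst_shot_pos hf hL hbs hx₀t₁ hpos).and
      (((continuous_fst_shot hf hL ht₁).tendsto bs).eventually (lt_mem_nhds hgt)))
  obtain ⟨-, t, ht, hneg⟩ := hb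
  exact (fst_pos_of_fst_gt hf hL le_rfl (isIntegralCurveOn_shot hf hL b) (by simp [shot_x₀])
    hx₀t₁ hbpos hbgt t ht).not_gt hneg

theorem isPosSol_shot_sSup :
    IsPosSol f a x₀ (shot hf hL x₀ (sSup (crossingSlopes hf hL x₀))) where
  isIntegralCurveOn := isIntegralCurveOn_shot hf hL _
  fst_x₀ := by simp [shot_x₀]
  pos := fst_pos_of_nonneg hf hL hf.zero_pos.le (isIntegralCurveOn_shot hf hL _)
    (shot_x₀ hf hL _) (sSup_crossingSlopes_pos hf hL).ne' fun _ ht => fst_shot_sSup_nonneg hf hL ht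
  le _ ht := fst_shot_sSup_le hf hL ht

end Shooting

end DuLin

namespace IsDuLin

variable {L a c x₀ : ℝ} {f : ℝ → ℝ → ℝ} {w z : ℝ → ℝ}

theorem isIntegralCurveOn (hw : IsDuLin x₀ f w) (hf : Admissible L f a)
    (hwc : ∀ t ∈ Ici x₀, w t ≤ c) :
    IsIntegralCurveOn (fun t => (w t, derivWithin w (Ici x₀) t)) (DuLin.field f c) (Ici x₀) := by
  have hwcont : ContinuousOn w (Ici x₀) := fun t ht => (hw.diff1 t ht).continuousWithinAt
  -- the equation extends to `x₀` by continuity of `w''`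
  have hode : EqOn (derivWithin (derivWithin w (Ici x₀)) (Ici x₀))
      (fun t => -(w t * f (w t) t)) (Ici x₀) := by
    refine EqOn.of_subset_closure (fun t ht => ?_) hw.cont2 ?_ Ioi_subset_Ici_self
      (by rw [closure_Ioi])
    · rw [← hw.ode t ht, neg_neg]
    · exact (hwcont.mul (hf.smooth.continuous.comp_continuousOn
        (hwcont.prodMk continuousOn_id))).neg
  intro t ht
  refine ((hw.diff1 t ht).hasDerivWithinAt.prodMk (hw.diff2 t ht).hasDerivWithinAt).congr_deriv ?_
  simp [DuLin.field, DuLin.reaction_of_mem ⟨hw.nonneg t ht, hwc t ht⟩, hode ht]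

theorem le (hw : IsDuLin x₀ f w) (hf : Admissible L f a) (hL : 0 < L) :
    ∀ t ∈ Ici x₀, w t ≤ a := by
  obtain ⟨M, hM⟩ := hw.bdd
  have hγ := hw.isIntegralCurveOn hf (c := max a M) fun t ht =>
    (le_abs_self _).trans ((hM t ht).trans (le_max_right _ _))
  intro t₁ ht₁
  by_contra! hgt
  obtain ⟨tc, htc, s, hs, hlin⟩ :=
    DuLin.exists_add_mul_sub_le_fst hf hL (le_max_left _ _) hγ hw.zero_at ht₁ hgt
  have hM0 : 0 ≤ M := (abs_nonneg _).trans (hM x₀ self_mem_Ici)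
  set T := tc + (M + 1) / s
  have hT : tc ≤ T := le_add_of_nonneg_right (div_nonneg (by linarith) hs.le)
  have hsT : s * (T - tc) = M + 1 := by
    simp only [T, add_sub_cancel_left]
    field_simp
  have := hlin T hT
  linarith [(le_abs_self _).trans (hM T (mem_Ici.2 ((le_of_lt htc.1).trans hT))), hf.zero_pos]

theorem derivWithin_pos (hw : IsDuLin x₀ f w) (hf : Admissible L f a) (hL : 0 < L) :
    0 < derivWithin w (Ici x₀) x₀ := by
  have hγ := hw.isIntegralCurveOn hf (hw.le hf hL)
  refine ((hw.diff1 x₀ self_mem_Ici).hasDerivWithinAt.nonneg_of_le_of_right fun y hy =>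
    hw.zero_at ▸ hw.nonneg y (Ioi_subset_Ici_self hy)).lt_of_ne' fun hb => ?_
  obtain ⟨x, hx, hne⟩ := hw.nonzero
  exact hne (congrArg Prod.fst (DuLin.eqOn_of_eq hγ hf hL hf.zero_pos.le
    (DuLin.isIntegralCurveOn_zero _) le_rfl (Prod.ext hw.zero_at hb) hx))

theorem isPosSol (hw : IsDuLin x₀ f w) (hf : Admissible L f a) (hL : 0 < L) :
    DuLin.IsPosSol f a x₀ fun t => (w t, derivWithin w (Ici x₀) t) where
  isIntegralCurveOn := hw.isIntegralCurveOn hf (hw.le hf hL)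
  fst_x₀ := hw.zero_at
  pos := DuLin.fst_pos_of_nonneg hf hL hf.zero_pos.le (hw.isIntegralCurveOn hf (hw.le hf hL))
    (Prod.ext hw.zero_at rfl) (hw.derivWithin_pos hf hL).ne' hw.nonneg
  le := hw.le hf hL

theorem eqOn (hw : IsDuLin x₀ f w) (hz : IsDuLin x₀ f z) (hf : Admissible L f a) (hL : 0 < L) :
    EqOn w z (Ici x₀) := fun _ ht =>
  congrArg Prod.fst (DuLin.IsPosSol.eqOn hf hL (hw.isPosSol hf hL) (hz.isPosSol hf hL) ht)

end IsDuLin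

/-- the periodic Du–Lin problem: existence, uniqueness (among bounded
nonnegative nonzero `C²` solutions), positivity on `(x₀, ∞)`, and positivity of the
right derivative at `x₀`. -/
theorem duLin_exists_unique
    (L : ℝ) (hL : 0 < L) (x₀ : ℝ)
    (f : ℝ → ℝ → ℝ) (a : ℝ) (hf : Admissible L f a) :
    ∃ z : ℝ → ℝ, IsDuLin x₀ f z ∧
      (∀ w : ℝ → ℝ, IsDuLin x₀ f w → Set.EqOn w z (Ici x₀)) ∧
      (∀ x : ℝ, x₀ < x → 0 < z x) ∧
      0 < derivWithin z (Ici x₀) x₀ := by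
  have hz := (DuLin.isPosSol_shot_sSup hf hL (x₀ := x₀)).isDuLin hf
  exact ⟨_, hz, fun w hw => hw.eqOn hz hf hL, fun x hx => (hz.isPosSol hf hL).pos x hx,
    hz.derivWithin_pos hf hL⟩
end
end

section
/- Fix a period L > 0, parameters d, α > 0, admissible nonlinearities f₁, f₂ with zeros a₁, a₂, and a point x_e ∈ ℝ. Let z₊ := z_{x_e, h} be the Du–Lin solution for h(u,x) := f₁(u/α, 2x_e − x) (admissible with zero α a₁), and let z₋ := z_{x_e, g_d} be the Du–Lin solution for g_d(u,x) := (1/d) f₂(u/d, x) (admissible with zero d a₂). If z₊'(x_e) = z₋'(x_e), then the function e defined by e(y) = z₊(2x_e − y) for y < x_e and e(y) = −z₋(y) for y ≥ x_e is a segregated stationary equilibrium; in particular e ∈ C²(ℝ) and −e'' = η(e, ·) on all of ℝ. -/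
/-!
Away from `x_e` each piece of `e` solves its own equation, which on the corresponding sign region
is `-e'' = η(e, ·)`. At `x_e` the slopes match by assumption, and the second derivatives match
because `z'' = -z f(z, ·)` vanishes where `z` does; so `e` is `C²`.

A Du–Lin solution `z` is positive on `(x_e, ∞)`: an interior zero would be a double zero, hence
`z ≡ 0` by uniqueness for the ODE. The monotonicity along the period reduces to
`z(x) ≤ z(x + L)`, proved by sliding. By periodicity `w := z(· + L)` solves the same equation.
Suppose `w` drops below `z` at some point and let `a` be the last crossing before it. Where
`w < z` the Wronskian `W = z'w - zw'` increases (`W' = zw (f(w, ·) - f(z, ·)) > 0` as `f` is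
decreasing), and `W(a) ≥ 0`. Hence `(w / z)' = -W / z²` stays below a negative constant for as
long as `w < z`, because `z` is bounded. So `w` never catches up with `z` again, and then `w / z` would become negative.
-/

open MeasureTheory Set Filter Topology Function

noncomputable section

theorem exists_last_zero_of_neg_of_pos {g : ℝ → ℝ} {a c : ℝ} (hac : a ≤ c)
    (hg : ContinuousOn g (Icc a c)) (ha : g a < 0) (hc : 0 < g c) :
    ∃ b ∈ Ioo a c, g b = 0 ∧ ∀ y ∈ Ioc b c, 0 < g y := by
  set S := Icc a c ∩ g ⁻¹' Iic 0
  have hSbdd : BddAbove S := ⟨c, fun y hy => hy.1.2⟩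
  have hbS : sSup S ∈ S :=
    (hg.preimage_isClosed_of_isClosed isClosed_Icc isClosed_Iic).csSup_mem
      ⟨a, ⟨le_rfl, hac⟩, ha.le⟩ hSbdd
  set b := sSup S
  have hbc : b < c := hbS.1.2.lt_of_ne fun h => (h ▸ hbS.2 : g c ≤ 0).not_gt hc
  obtain ⟨y, hy, hy0⟩ := intermediate_value_Icc hbc.le (hg.mono (Icc_subset_Icc_left hbS.1.1))
    ⟨hbS.2, hc.le⟩
  have hyb : y = b := le_antisymm (le_csSup hSbdd ⟨⟨hbS.1.1.trans hy.1, hy.2⟩, hy0.le⟩) hy.1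
  rw [hyb] at hy0
  refine ⟨b, ⟨hbS.1.1.lt_of_ne fun h => (h ▸ hy0 : g a = 0).not_lt ha, hbc⟩, hy0, ?_⟩
  intro x hx
  by_contra! hgx
  exact hx.1.not_ge (le_csSup hSbdd ⟨⟨hbS.1.1.trans hx.1.le, hx.2⟩, hgx⟩)

theorem exists_first_zero_of_pos_of_nonpos {g : ℝ → ℝ} {c y : ℝ} (hcy : c ≤ y)
    (hg : ContinuousOn g (Icc c y)) (hc : 0 < g c) (hy : g y ≤ 0) :
    ∃ b ∈ Ioc c y, g b = 0 ∧ ∀ x ∈ Ico c b, 0 < g x := by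
  set S := Icc c y ∩ g ⁻¹' Iic 0
  have hSbdd : BddBelow S := ⟨c, fun x hx => hx.1.1⟩
  have hbS : sInf S ∈ S :=
    (hg.preimage_isClosed_of_isClosed isClosed_Icc isClosed_Iic).csInf_mem
      ⟨y, ⟨hcy, le_rfl⟩, hy⟩ hSbdd
  set b := sInf S
  have hcb : c < b := hbS.1.1.lt_of_ne' fun h => (h ▸ hbS.2 : g c ≤ 0).not_gt hc
  obtain ⟨x, hx, hx0⟩ := intermediate_value_Icc' hcb.le (hg.mono (Icc_subset_Icc_right hbS.1.2))
    ⟨hbS.2, hc.le⟩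
  have hxb : x = b := le_antisymm hx.2 (csInf_le hSbdd ⟨⟨hx.1, hx.2.trans hbS.1.2⟩, hx0.le⟩)
  rw [hxb] at hx0
  refine ⟨b, ⟨hcb, hbS.1.2⟩, hx0, ?_⟩
  intro t ht
  by_contra! hgt
  exact ht.2.not_ge (csInf_le hSbdd ⟨⟨ht.1, ht.2.le.trans hbS.1.2⟩, hgt⟩)

theorem HasDerivAt.nonneg_of_forall_Ioo_le {g : ℝ → ℝ} {g' a c : ℝ} (h : HasDerivAt g g' a)
    (hac : a < c) (hle : ∀ y ∈ Ioo a c, g a ≤ g y) : 0 ≤ g' := by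
  have h' := h.hasDerivWithinAt (s := Ioi a)
  rw [hasDerivWithinAt_iff_tendsto_slope, sdiff_singleton_eq_self self_notMem_Ioi] at h'
  refine ge_of_tendsto h' ?_
  filter_upwards [Ioo_mem_nhdsGT hac] with y hy
  rw [slope_def_field]
  exact div_nonneg (sub_nonneg.2 (hle y hy)) (sub_pos.2 hy.1).le

theorem HasDerivWithinAt.comp_reflect {g : ℝ → ℝ} {g' c y : ℝ}
    (h : HasDerivWithinAt g g' (Ici c) (2 * c - y)) :
    HasDerivWithinAt (fun x => g (2 * c - x)) (-g') (Iic c) y := by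
  have hρ : HasDerivWithinAt (fun x : ℝ => 2 * c - x) (-1) (Iic c) y := by
    simpa using ((hasDerivAt_id y).const_sub (2 * c)).hasDerivWithinAt
  have hmaps : MapsTo (fun x : ℝ => 2 * c - x) (Iic c) (Ici c) :=
    fun x (hx : x ≤ c) => show c ≤ 2 * c - x by linarith
  simpa [Function.comp_def] using h.comp y hρ hmaps

theorem hasDerivAt_ite_lt {g h g' h' : ℝ → ℝ} {c : ℝ}
    (hg : ∀ y ≤ c, HasDerivWithinAt g (g' y) (Iic c) y)
    (hh : ∀ y ≥ c, HasDerivWithinAt h (h' y) (Ici c) y)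
    (hval : g c = h c) (hder : g' c = h' c) (y : ℝ) :
    HasDerivAt (fun x => if x < c then g x else h x) (if y < c then g' y else h' y) y := by
  rcases lt_trichotomy y c with hy | rfl | hy
  · rw [if_pos hy]
    refine ((hg y hy.le).hasDerivAt (Iic_mem_nhds hy)).congr_of_eventuallyEq ?_
    filter_upwards [Iio_mem_nhds hy] with x (hx : x < c)
    rw [if_pos hx]
  · rw [if_neg (lt_irrefl y)]
    have hleft : HasDerivWithinAt (fun x => if x < y then g x else h x) (h' y) (Iic y) y := by
      refine (hder ▸ hg y le_rfl).congr (fun x (hx : x ≤ y) => ?_)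
        (by rw [if_neg (lt_irrefl y), hval])
      rcases hx.lt_or_eq with hx | rfl
      · rw [if_pos hx]
      · rw [if_neg (lt_irrefl x), hval]
    have hright : HasDerivWithinAt (fun x => if x < y then g x else h x) (h' y) (Ici y) y :=
      (hh y le_rfl).congr (fun x hx => if_neg (not_lt.2 hx)) (if_neg (lt_irrefl y))
    have hboth := hleft.union hright
    rw [Iic_union_Ici] at hboth
    exact hboth.hasDerivAt univ_mem
  · rw [if_neg hy.not_gt]
    refine ((hh y hy.le).hasDerivAt (Ici_mem_nhds hy)).congr_of_eventuallyEq ?_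
    filter_upwards [Ioi_mem_nhds hy] with x (hx : c < x)
    rw [if_neg hx.not_gt]

theorem contDiff_two_of_hasDerivAt {e e' e'' : ℝ → ℝ} (h₁ : ∀ x, HasDerivAt e (e' x) x)
    (h₂ : ∀ x, HasDerivAt e' (e'' x) x) (h₃ : Continuous e'') : ContDiff ℝ 2 e := by
  have hd : deriv e = e' := funext fun x => (h₁ x).deriv
  have hd' : deriv e' = e'' := funext fun x => (h₂ x).deriv
  rw [show (2 : WithTop ℕ∞) = 1 + 1 from rfl, contDiff_succ_iff_deriv, hd,
    contDiff_one_iff_deriv, hd']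
  exact ⟨fun x => (h₁ x).differentiableAt, by simp, fun x => (h₂ x).differentiableAt, h₃⟩

def wronskian (z z' w w' : ℝ → ℝ) (x : ℝ) : ℝ := z' x * w x - z x * w' x

theorem wronskian_nonneg_of_eq {z z' w w' : ℝ → ℝ} {a c : ℝ} (hz : HasDerivAt z (z' a) a)
    (hw : HasDerivAt w (w' a) a) (hza : 0 ≤ z a) (heq : z a = w a) (hac : a < c)
    (hlt : ∀ x ∈ Ioo a c, w x < z x) : 0 ≤ wronskian z z' w w' a := by
  have hslope : 0 ≤ z' a - w' a :=
    (hz.sub hw).nonneg_of_forall_Ioo_le hac fun x hx => by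
      simp only [Pi.sub_apply, heq, sub_self, sub_nonneg]; exact (hlt x hx).le
  calc 0 ≤ z a * (z' a - w' a) := mul_nonneg hza hslope
    _ = wronskian z z' w w' a := by rw [wronskian, ← heq]; ring

theorem antitoneOn_div_add_mul_of_le_wronskian {z z' w w' : ℝ → ℝ} {c X κ M : ℝ}
    (hz : ∀ x ∈ Icc c X, HasDerivAt z (z' x) x) (hw : ∀ x ∈ Icc c X, HasDerivAt w (w' x) x)
    (hzpos : ∀ x ∈ Icc c X, 0 < z x) (hzM : ∀ x ∈ Icc c X, z x ≤ M) (hκ : 0 ≤ κ)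
    (hW : ∀ x ∈ Icc c X, κ ≤ wronskian z z' w w' x) :
    AntitoneOn (fun x => w x / z x + κ / M ^ 2 * x) (Icc c X) := by
  have hderiv : ∀ x ∈ Icc c X, HasDerivAt (fun x => w x / z x + κ / M ^ 2 * x)
      (κ / M ^ 2 - wronskian z z' w w' x / z x ^ 2) x := by
    intro x hx
    have hzx := (hzpos x hx).ne'
    refine (((hw x hx).div (hz x hx) hzx).add
      ((hasDerivAt_id x).const_mul (κ / M ^ 2))).congr_deriv ?_
    simp only [wronskian]
    field_simp
    ring
  refine antitoneOn_of_deriv_nonpos (convex_Icc c X)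
    (fun x hx => (hderiv x hx).continuousAt.continuousWithinAt)
    (fun x hx => (hderiv x (interior_subset hx)).differentiableAt.differentiableWithinAt) ?_
  intro x hx
  have hx' := interior_subset hx
  rw [(hderiv x hx').deriv, sub_nonpos]
  have hzx := hzpos x hx'
  calc κ / M ^ 2 ≤ κ / z x ^ 2 :=
        div_le_div_of_nonneg_left hκ (by positivity) (pow_le_pow_left₀ hzx.le (hzM x hx') 2)
    _ ≤ wronskian z z' w w' x / z x ^ 2 := div_le_div_of_nonneg_right (hW x hx') (by positivity)

def SolvesOn (f : ℝ → ℝ → ℝ) (s : Set ℝ) (z z' : ℝ → ℝ) : Prop :=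
  ∀ x ∈ s, HasDerivAt z (z' x) x ∧ HasDerivAt z' (-(z x * f (z x) x)) x

theorem exists_lipschitzOnWith_reactionField {f : ℝ → ℝ → ℝ} (hf : ContDiff ℝ 1 (uncurry f))
    (a b R : ℝ) : ∃ K, ∀ t ∈ Icc a b,
      LipschitzOnWith K (fun q : ℝ × ℝ => (q.2, -(q.1 * f q.1 t))) (Metric.closedBall 0 R) := by
  set G : ℝ × ℝ × ℝ → ℝ × ℝ := fun p => (p.2.2, -(p.2.1 * f p.2.1 p.1))
  have hG : ContDiff ℝ 1 G := contDiff_snd.snd.prodMk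
    (contDiff_snd.fst.mul (hf.comp (contDiff_snd.fst.prodMk contDiff_fst))).neg
  obtain ⟨K, hK⟩ := hG.contDiffOn.exists_lipschitzOnWith one_ne_zero
    ((convex_Icc a b).prod (convex_closedBall 0 R)) (isCompact_Icc.prod (isCompact_closedBall 0 R))
  refine ⟨K, fun t ht => ?_⟩
  have hKt := hK.comp (LipschitzWith.prodMk_left t).lipschitzOnWith fun q hq => ⟨ht, hq⟩
  rwa [mul_one] at hKt

namespace SolvesOn

variable {f : ℝ → ℝ → ℝ} {s t : Set ℝ} {z z' w w' : ℝ → ℝ} {x₀ M a b c : ℝ}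

theorem mono (hz : SolvesOn f s z z') (hts : t ⊆ s) : SolvesOn f t z z' :=
  fun x hx => hz x (hts hx)

theorem comp_add_period {L : ℝ} (hz : SolvesOn f s z z') (hper : ∀ u x, f u (x + L) = f u x) :
    SolvesOn f ((· + L) ⁻¹' s) (fun x => z (x + L)) (fun x => z' (x + L)) := by
  intro x hx
  obtain ⟨h₁, h₂⟩ := hz (x + L) hx
  exact ⟨h₁.comp_add_const x L, by simpa only [hper] using h₂.comp_add_const x L⟩

theorem eqOn_zero (hf : ContDiff ℝ 1 (uncurry f)) {p : ℝ} (hz : SolvesOn f (Icc a b) z z')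
    (hp : p ∈ Ioo a b) (h₀ : z p = 0) (h₀' : z' p = 0) : EqOn z 0 (Icc a b) := by
  have hF : ContinuousOn (fun t => (z t, z' t)) (Icc a b) := fun t ht =>
    ((hz t ht).1.continuousAt.prodMk (hz t ht).2.continuousAt).continuousWithinAt
  obtain ⟨R, hR⟩ := isCompact_Icc.exists_bound_of_continuousOn hF
  obtain ⟨K, hK⟩ := exists_lipschitzOnWith_reactionField hf a b R
  have hR₀ : 0 ≤ R := (norm_nonneg _).trans (hR p (Ioo_subset_Icc_self hp))
  have hsol := ODE_solution_unique_of_mem_Icc (s := fun _ => Metric.closedBall 0 R)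
    (g := fun _ => 0) (fun t ht => hK t (Ioo_subset_Icc_self ht)) hp hF
    (fun t ht => (hz t (Ioo_subset_Icc_self ht)).1.prodMk (hz t (Ioo_subset_Icc_self ht)).2)
    (fun t ht => mem_closedBall_zero_iff.2 (hR t (Ioo_subset_Icc_self ht))) continuousOn_const
    (fun t _ => (hasDerivAt_const t (0 : ℝ × ℝ)).congr_deriv (by ext <;> simp))
    (fun t _ => by simpa using hR₀)
    (by simp [h₀, h₀'])
  exact fun t ht => congrArg Prod.fst (hsol ht)

theorem pos (hf : ContDiff ℝ 1 (uncurry f)) (hz : SolvesOn f (Ioi x₀) z z')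
    (hnonneg : ∀ x > x₀, 0 ≤ z x) (hne : ∃ x > x₀, z x ≠ 0) {x : ℝ} (hx : x₀ < x) : 0 < z x := by
  refine (hnonneg x hx).lt_of_ne' fun hzx => ?_
  obtain ⟨y, hy, hzy⟩ := hne
  have hmin : IsLocalMin z x := by
    filter_upwards [Ioi_mem_nhds hx] with t ht
    rw [hzx]
    exact hnonneg t ht
  have hsub : Icc ((x₀ + min x y) / 2) (max x y + 1) ⊆ Ioi x₀ := fun t ht =>
    lt_of_lt_of_le (by linarith [lt_min hx hy]) ht.1
  have hzero := (hz.mono hsub).eqOn_zero hf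
    ⟨by linarith [min_le_left x y, lt_min hx hy], by linarith [le_max_left x y]⟩ hzx
    (hmin.hasDerivAt_eq_zero (hz x hx).1)
  exact hzy (hzero ⟨by linarith [min_le_right x y, lt_min hx hy], by linarith [le_max_right x y]⟩)

theorem hasDerivAt_wronskian (hz : SolvesOn f s z z') (hw : SolvesOn f s w w') {x : ℝ}
    (hx : x ∈ s) :
    HasDerivAt (wronskian z z' w w') (z x * w x * (f (w x) x - f (z x) x)) x := by
  obtain ⟨hz₁, hz₂⟩ := hz x hx
  obtain ⟨hw₁, hw₂⟩ := hw x hx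
  exact ((hz₂.mul hw₁).sub (hz₁.mul hw₂)).congr_deriv (by ring)

theorem wronskian_strictMonoOn (hanti : ∀ x, StrictAnti (f · x))
    (hz : SolvesOn f (Icc a b) z z') (hw : SolvesOn f (Icc a b) w w')
    (hw₀ : ∀ x ∈ Ioo a b, 0 < w x) (hlt : ∀ x ∈ Ioo a b, w x < z x) :
    StrictMonoOn (wronskian z z' w w') (Icc a b) := by
  refine strictMonoOn_of_deriv_pos (convex_Icc a b)
    (fun x hx => (hz.hasDerivAt_wronskian hw hx).continuousAt.continuousWithinAt) ?_
  intro x hx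
  rw [interior_Icc] at hx
  rw [(hz.hasDerivAt_wronskian hw (Ioo_subset_Icc_self hx)).deriv]
  have hw₀x := hw₀ x hx
  exact mul_pos (mul_pos (hw₀x.trans (hlt x hx)) hw₀x) (sub_pos.2 (hanti x (hlt x hx)))

theorem div_add_mul_le_of_eq (hanti : ∀ x, StrictAnti (f · x)) (hz : SolvesOn f (Ioi x₀) z z')
    (hw : SolvesOn f (Ioi x₀) w w') (hzpos : ∀ x > x₀, 0 < z x) (hwpos : ∀ x > x₀, 0 < w x)
    (hzM : ∀ x > x₀, z x ≤ M) (ha : x₀ < a) (heq : z a = w a) (hc : c ∈ Ioc a b)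
    (hlt : ∀ x ∈ Ioo a b, w x < z x) :
    0 < wronskian z z' w w' c ∧
      w b / z b + wronskian z z' w w' c / M ^ 2 * (b - c) ≤ w c / z c := by
  have hsub : Icc a b ⊆ Ioi x₀ := fun x hx => ha.trans_le hx.1
  have hmono := wronskian_strictMonoOn hanti (hz.mono hsub) (hw.mono hsub)
    (fun x hx => hwpos x (ha.trans hx.1)) hlt
  have hWc : 0 < wronskian z z' w w' c :=
    (wronskian_nonneg_of_eq (hz a ha).1 (hw a ha).1 (hzpos a ha).le heq hc.1
      fun x hx => hlt x ⟨hx.1, hx.2.trans_le hc.2⟩).trans_lt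
      (hmono ⟨le_rfl, hc.1.le.trans hc.2⟩ ⟨hc.1.le, hc.2⟩ hc.1)
  have hsubc : Icc c b ⊆ Ioi x₀ := fun x hx => (ha.trans hc.1).trans_le hx.1
  have hdecay := antitoneOn_div_add_mul_of_le_wronskian (M := M)
    (fun x hx => (hz x (hsubc hx)).1) (fun x hx => (hw x (hsubc hx)).1)
    (fun x hx => hzpos x (hsubc hx)) (fun x hx => hzM x (hsubc hx)) hWc.le
    (fun x hx => hmono.monotoneOn ⟨hc.1.le, hc.2⟩ ⟨hc.1.le.trans hx.1, hx.2⟩ hx.1)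
    ⟨le_rfl, hc.2⟩ ⟨hc.2, le_rfl⟩ hc.2
  refine ⟨hWc, ?_⟩
  simp only at hdecay
  linarith

theorem exists_le_of_eq (hanti : ∀ x, StrictAnti (f · x)) (hz : SolvesOn f (Ioi x₀) z z')
    (hw : SolvesOn f (Ioi x₀) w w') (hzpos : ∀ x > x₀, 0 < z x) (hwpos : ∀ x > x₀, 0 < w x)
    (hzM : ∀ x > x₀, z x ≤ M) (ha : x₀ < a) (hac : a < c) (heq : z a = w a) :
    ∃ x ∈ Ioc a c, z x ≤ w x := by
  by_contra! hlt
  have hltc : ∀ b, (∀ x ∈ Ico c b, w x < z x) → ∀ x ∈ Ioo a b, w x < z x := fun b hb x hx =>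
    (le_or_gt x c).elim (fun h => hlt x ⟨hx.1, h⟩) (fun h => hb x ⟨h.le, hx.2⟩)
  have hdecay : ∀ b, c ≤ b → (∀ x ∈ Ico c b, w x < z x) →
      w b / z b + wronskian z z' w w' c / M ^ 2 * (b - c) ≤ w c / z c := fun b hcb hb =>
    (div_add_mul_le_of_eq hanti hz hw hzpos hwpos hzM ha heq ⟨hac, hcb⟩ (hltc b hb)).2
  have hc : x₀ < c := ha.trans hac
  set δ := wronskian z z' w w' c / M ^ 2
  have hδ : 0 < δ := div_pos
    (div_add_mul_le_of_eq hanti hz hw hzpos hwpos hzM ha heq ⟨hac, le_rfl⟩ (hltc c (by simp))).1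
    (pow_pos ((hzpos c hc).trans_le (hzM c hc)) 2)
  have hqc : w c / z c < 1 := (div_lt_one (hzpos c hc)).2 (hlt c ⟨hac, le_rfl⟩)
  have hqc₀ : 0 ≤ w c / z c := div_nonneg (hwpos c hc).le (hzpos c hc).le
  -- `w / z ≥ 0` cannot keep decreasing at rate `δ` past `X`.
  set X := c + (w c / z c + 1) / δ
  have hcX : c < X := lt_add_of_pos_right c (div_pos (by linarith) hδ)
  by_cases hall : ∀ x ∈ Icc c X, w x < z x
  · have hX := hdecay X hcX.le fun x hx => hall x (Ico_subset_Icc_self hx)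
    have hδX : δ * (X - c) = w c / z c + 1 := by simp only [X]; field_simp; ring
    have hqX : 0 ≤ w X / z X := div_nonneg (hwpos X (hc.trans hcX)).le (hzpos X (hc.trans hcX)).le
    linarith
  · push Not at hall
    obtain ⟨y, hy, hzy⟩ := hall
    have hcont : ContinuousOn (fun x => z x - w x) (Icc c y) := fun x hx =>
      ((hz x (hc.trans_le hx.1)).1.continuousAt.sub
        (hw x (hc.trans_le hx.1)).1.continuousAt).continuousWithinAt
    obtain ⟨b, hb, hb0, hbpos⟩ := exists_first_zero_of_pos_of_nonpos hy.1 hcont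
      (sub_pos.2 (hlt c ⟨hac, le_rfl⟩)) (sub_nonpos.2 hzy)
    have hb' := hdecay b hb.1.le fun x hx => sub_pos.1 (hbpos x hx)
    rw [← sub_eq_zero.1 hb0, div_self (hzpos b (hc.trans hb.1)).ne'] at hb'
    nlinarith [mul_nonneg hδ.le (sub_nonneg.2 hb.1.le)]

theorem le_comp_add_period {L : ℝ} (hz : SolvesOn f (Ioi x₀) z z') (hL : 0 < L)
    (hper : ∀ u x, f u (x + L) = f u x) (hanti : ∀ x, StrictAnti (f · x))
    (hcont : ContinuousOn z (Ici x₀)) (hzero : z x₀ = 0) (hzpos : ∀ x > x₀, 0 < z x)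
    (hzM : ∀ x > x₀, z x ≤ M) {x : ℝ} (hx : x₀ ≤ x) : z x ≤ z (x + L) := by
  by_contra! hc
  have hw : SolvesOn f (Ioi x₀) (fun y => z (y + L)) (fun y => z' (y + L)) :=
    (hz.comp_add_period hper).mono fun y (hy : x₀ < y) => show x₀ < y + L by linarith
  have hwpos : ∀ y > x₀, 0 < z (y + L) := fun y hy => hzpos _ (by linarith)
  have hgcont : ContinuousOn (fun y => z y - z (y + L)) (Icc x₀ x) :=
    (hcont.mono Icc_subset_Ici_self).sub (hcont.comp (continuous_add_const L).continuousOn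
      fun y hy => show x₀ ≤ y + L by linarith [hy.1])
  obtain ⟨a, ha, ha0, hapos⟩ := exists_last_zero_of_neg_of_pos hx hgcont
    (by simpa [hzero] using hzpos (x₀ + L) (by linarith)) (sub_pos.2 hc)
  obtain ⟨y, hy, hzy⟩ := exists_le_of_eq hanti hz hw hzpos hwpos hzM ha.1 ha.2 (sub_eq_zero.1 ha0)
  exact (sub_pos.1 (hapos y hy)).not_ge hzy

end SolvesOn

namespace Admissible

variable {L a : ℝ} {f : ℝ → ℝ → ℝ}

theorem comp_div (hf : Admissible L f a) {s : ℝ} (hs : 0 < s) :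
    Admissible L (fun u x => f (u / s) x) (s * a) where
  smooth := hf.smooth.comp ((contDiff_fst.div_const s).prodMk contDiff_snd)
  periodic u x := hf.periodic (u / s) x
  pos_at_zero := by simpa only [zero_div] using hf.pos_at_zero
  strict_anti x _ _ huv := hf.strict_anti x (div_lt_div_of_pos_right huv hs)
  zero_pos := mul_pos hs hf.zero_pos
  zero_root x := by simpa only [mul_div_cancel_left₀ a hs.ne'] using hf.zero_root x

theorem comp_reflect (hf : Admissible L f a) (c : ℝ) :
    Admissible L (fun u x => f u (c - x)) a where
  smooth := hf.smooth.comp (contDiff_fst.prodMk (contDiff_const.sub contDiff_snd))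
  periodic u x := by
    simpa only [show c - (x + L) + L = c - x by ring] using (hf.periodic u (c - (x + L))).symm
  pos_at_zero := by
    obtain ⟨m, hm, hfm⟩ := hf.pos_at_zero
    exact ⟨m, hm, fun x => hfm (c - x)⟩
  strict_anti x := hf.strict_anti (c - x)
  zero_pos := hf.zero_pos
  zero_root x := hf.zero_root (c - x)

theorem const_mul (hf : Admissible L f a) {k : ℝ} (hk : 0 < k) :
    Admissible L (fun u x => k * f u x) a where
  smooth := contDiff_const.mul hf.smooth
  periodic u x := by rw [hf.periodic]
  pos_at_zero := by
    obtain ⟨m, hm, hfm⟩ := hf.pos_at_zero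
    exact ⟨k * m, mul_pos hk hm, fun x => mul_le_mul_of_nonneg_left (hfm x) hk.le⟩
  strict_anti x _ _ huv := mul_lt_mul_of_pos_left (hf.strict_anti x huv) hk
  zero_pos := hf.zero_pos
  zero_root x := by rw [hf.zero_root, mul_zero]

end Admissible

namespace IsDuLin

variable {x₀ : ℝ} {f : ℝ → ℝ → ℝ} {z : ℝ → ℝ}

theorem continuousOn (hz : IsDuLin x₀ f z) : ContinuousOn z (Ici x₀) :=
  fun x hx => (hz.diff1 x hx).continuousWithinAt

theorem solvesOn (hz : IsDuLin x₀ f z) : SolvesOn f (Ioi x₀) z (derivWithin z (Ici x₀)) := by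
  rintro x (hx : x₀ < x)
  refine ⟨(hz.diff1 x hx.le).hasDerivWithinAt.hasDerivAt (Ici_mem_nhds hx), ?_⟩
  rw [← hz.ode x hx, neg_neg]
  exact (hz.diff2 x hx.le).hasDerivWithinAt.hasDerivAt (Ici_mem_nhds hx)

theorem derivWithin_derivWithin_eq (hz : IsDuLin x₀ f z) (hf : Continuous (uncurry f)) :
    EqOn (derivWithin (derivWithin z (Ici x₀)) (Ici x₀)) (fun x => -(z x * f (z x) x)) (Ici x₀) :=
  EqOn.of_subset_closure (fun x hx => by rw [← hz.ode x hx, neg_neg]) hz.cont2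
    (hz.continuousOn.mul (hf.comp_continuousOn (hz.continuousOn.prodMk continuousOn_id))).neg
    Ioi_subset_Ici_self (by rw [closure_Ioi])

theorem pos (hz : IsDuLin x₀ f z) (hf : ContDiff ℝ 1 (uncurry f)) {x : ℝ} (hx : x₀ < x) :
    0 < z x := by
  refine hz.solvesOn.pos hf (fun y hy => hz.nonneg y hy.le) ?_ hx
  obtain ⟨y, hy, hzy⟩ := hz.nonzero
  exact ⟨y, (mem_Ici.1 hy).lt_of_ne fun h => hzy (h ▸ hz.zero_at), hzy⟩

theorem le_add_period {L a : ℝ} (hz : IsDuLin x₀ f z) (hf : Admissible L f a) (hL : 0 < L)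
    {x : ℝ} (hx : x₀ ≤ x) : z x ≤ z (x + L) := by
  obtain ⟨M, hM⟩ := hz.bdd
  exact hz.solvesOn.le_comp_add_period hL hf.periodic hf.strict_anti hz.continuousOn hz.zero_at
    (fun y hy => hz.pos hf.smooth hy) (fun y hy => (le_abs_self _).trans (hM y hy.le)) hx

end IsDuLin

section Eta

variable {d α : ℝ} {f₁ f₂ : ℝ → ℝ → ℝ}

theorem eta_of_nonneg {z : ℝ} (hz : 0 ≤ z) (x : ℝ) : eta d α f₁ f₂ z x = f₁ (z / α) x * z := by
  simp [eta, max_eq_left hz, min_eq_right hz]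

theorem eta_of_nonpos {z : ℝ} (hz : z ≤ 0) (x : ℝ) :
    eta d α f₁ f₂ z x = 1 / d * f₂ (-z / d) x * z := by
  simp [eta, max_eq_right hz, min_eq_left hz]

theorem continuous_eta_comp (hf₁ : Continuous (uncurry f₁)) (hf₂ : Continuous (uncurry f₂))
    {e : ℝ → ℝ} (he : Continuous e) : Continuous fun x => eta d α f₁ f₂ (e x) x := by
  have h₁ : Continuous fun x => f₁ (e x / α) x := hf₁.comp ((he.div_const α).prodMk continuous_id)
  have h₂ : Continuous fun x => f₂ (-e x / d) x :=
    hf₂.comp ((he.neg.div_const d).prodMk continuous_id)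
  exact (h₁.mul (he.max continuous_const)).sub
    ((continuous_const.mul h₂).mul (he.min continuous_const).neg)

end Eta

def glue (x₀ : ℝ) (zp zn : ℝ → ℝ) (y : ℝ) : ℝ := if y < x₀ then zp (2 * x₀ - y) else -(zn y)

section Glue

variable {x₀ : ℝ} {zp zn : ℝ → ℝ}

theorem exists_abs_glue_le (hp : ∃ M, ∀ x ∈ Ici x₀, |zp x| ≤ M)
    (hn : ∃ M, ∀ x ∈ Ici x₀, |zn x| ≤ M) : ∃ M, ∀ y, |glue x₀ zp zn y| ≤ M := by
  obtain ⟨Mp, hMp⟩ := hp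
  obtain ⟨Mn, hMn⟩ := hn
  refine ⟨max Mp Mn, fun y => ?_⟩
  unfold glue
  split_ifs with hy
  · exact (hMp _ (show x₀ ≤ 2 * x₀ - y by linarith)).trans (le_max_left _ _)
  · rw [abs_neg]
    exact (hMn y (not_lt.1 hy)).trans (le_max_right _ _)

theorem glue_add_le {L : ℝ} (hL : 0 ≤ L) (hp : ∀ x ∈ Ici x₀, zp x ≤ zp (x + L))
    (hn : ∀ x ∈ Ici x₀, zn x ≤ zn (x + L)) (hp₀ : ∀ x ∈ Ici x₀, 0 ≤ zp x)
    (hn₀ : ∀ x ∈ Ici x₀, 0 ≤ zn x) (y : ℝ) : glue x₀ zp zn (y + L) ≤ glue x₀ zp zn y := by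
  unfold glue
  by_cases h₁ : y + L < x₀
  · rw [if_pos h₁, if_pos (by linarith)]
    simpa only [show 2 * x₀ - (y + L) + L = 2 * x₀ - y by ring]
      using hp (2 * x₀ - (y + L)) (show x₀ ≤ _ by linarith)
  · rw [if_neg h₁]
    split_ifs with h₂
    · linarith [hn₀ (y + L) (not_lt.1 h₁), hp₀ (2 * x₀ - y) (show x₀ ≤ _ by linarith)]
    · linarith [hn y (not_lt.1 h₂)]

theorem bddAbove_glue_pos (hn₀ : ∀ x ∈ Ici x₀, 0 ≤ zn x) :
    BddAbove {y | 0 < glue x₀ zp zn y} := by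
  refine ⟨x₀, fun y hy => ?_⟩
  by_contra! h
  simp only [mem_ofPred_eq, glue, if_neg h.not_gt] at hy
  linarith [hn₀ y h.le]

end Glue

namespace IsDuLin

variable {xe : ℝ} {fp fn : ℝ → ℝ → ℝ} {zp zn : ℝ → ℝ}

theorem hasDerivAt_glue (hzp : IsDuLin xe fp zp) (hzn : IsDuLin xe fn zn)
    (hfp : Continuous (uncurry fp)) (hfn : Continuous (uncurry fn))
    (heq : derivWithin zp (Ici xe) xe = derivWithin zn (Ici xe) xe) :
    ∃ e' : ℝ → ℝ, (∀ y, HasDerivAt (glue xe zp zn) (e' y) y) ∧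
      ∀ y, HasDerivAt e' (glue xe (derivWithin (derivWithin zp (Ici xe)) (Ici xe))
        (derivWithin (derivWithin zn (Ici xe)) (Ici xe)) y) y := by
  have hρ : ∀ y ≤ xe, 2 * xe - y ∈ Ici xe := fun y hy => show xe ≤ _ by linarith
  have h2xe : 2 * xe - xe = xe := by ring
  have hp₂ := hzp.derivWithin_derivWithin_eq hfp self_mem_Ici
  have hn₂ := hzn.derivWithin_derivWithin_eq hfn self_mem_Ici
  simp only [hzp.zero_at, hzn.zero_at, zero_mul, neg_zero] at hp₂ hn₂
  refine ⟨fun y => if y < xe then -derivWithin zp (Ici xe) (2 * xe - y)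
    else -derivWithin zn (Ici xe) y, hasDerivAt_ite_lt (g := fun x => zp (2 * xe - x))
      (h := fun x => -zn x) ?_ ?_ ?_ ?_, hasDerivAt_ite_lt ?_ ?_ ?_ ?_⟩
  · exact fun y hy => (hzp.diff1 _ (hρ y hy)).hasDerivWithinAt.comp_reflect
  · exact fun y hy => (hzn.diff1 y hy).hasDerivWithinAt.neg
  · simp only [h2xe, hzp.zero_at, hzn.zero_at, neg_zero]
  · simp only [h2xe, heq]
  · exact fun y hy =>
      (hzp.diff2 _ (hρ y hy)).hasDerivWithinAt.comp_reflect.neg.congr_deriv (neg_neg _)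
  · exact fun y hy => (hzn.diff2 y hy).hasDerivWithinAt.neg
  · simp only [h2xe, heq]
  · simp only [h2xe, hp₂, hn₂, neg_zero]

theorem glue_derivWithin_derivWithin_eq {d α : ℝ} {f₁ f₂ : ℝ → ℝ → ℝ}
    (hzp : IsDuLin xe (fun u y => f₁ (u / α) (2 * xe - y)) zp)
    (hzn : IsDuLin xe (fun u y => 1 / d * f₂ (u / d) y) zn)
    (hfp : Continuous (uncurry fun u y => f₁ (u / α) (2 * xe - y)))
    (hfn : Continuous (uncurry fun u y => 1 / d * f₂ (u / d) y)) (y : ℝ) :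
    glue xe (derivWithin (derivWithin zp (Ici xe)) (Ici xe))
      (derivWithin (derivWithin zn (Ici xe)) (Ici xe)) y = -eta d α f₁ f₂ (glue xe zp zn y) y := by
  unfold glue
  split_ifs with hy
  · have hρ : xe ≤ 2 * xe - y := by linarith
    rw [hzp.derivWithin_derivWithin_eq hfp hρ, eta_of_nonneg (hzp.nonneg _ hρ)]
    beta_reduce
    rw [sub_sub_cancel, mul_comm]
  · have hy' : xe ≤ y := not_lt.1 hy
    rw [hzn.derivWithin_derivWithin_eq hfn hy', eta_of_nonpos (neg_nonpos.2 (hzn.nonneg y hy'))]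
    simp only [neg_neg]
    ring

end IsDuLin

/-- gluing two Du–Lin solutions with matching slopes at `x_e` produces
a segregated stationary equilibrium (in particular `C²` on all of `ℝ`, solving
`-e'' = η(e, ·)` everywhere). -/
theorem seg_equilibrium_from_matching_slopes
    (L d α a₁ a₂ : ℝ) (hL : 0 < L) (hd : 0 < d) (hα : 0 < α)
    (f₁ f₂ : ℝ → ℝ → ℝ) (hf₁ : Admissible L f₁ a₁) (hf₂ : Admissible L f₂ a₂)
    (xe : ℝ) (zp zn : ℝ → ℝ)
    (hzp : IsDuLin xe (fun u y => f₁ (u / α) (2 * xe - y)) zp)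
    (hzn : IsDuLin xe (fun u y => (1 / d) * f₂ (u / d) y) zn)
    (heq : derivWithin zp (Ici xe) xe = derivWithin zn (Ici xe) xe) :
    SegEquilibrium L d α f₁ f₂
      (fun y => if y < xe then zp (2 * xe - y) else -(zn y)) := by
  show SegEquilibrium L d α f₁ f₂ (glue xe zp zn)
  have hfp : Admissible L (fun u y => f₁ (u / α) (2 * xe - y)) (α * a₁) :=
    (hf₁.comp_div hα).comp_reflect (2 * xe)
  have hfn : Admissible L (fun u y => 1 / d * f₂ (u / d) y) (d * a₂) :=
    (hf₂.comp_div hd).const_mul (one_div_pos.2 hd)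
  obtain ⟨e', he', he''⟩ :=
    hzp.hasDerivAt_glue hzn hfp.smooth.continuous hfn.smooth.continuous heq
  have hode := hzp.glue_derivWithin_derivWithin_eq hzn hfp.smooth.continuous hfn.smooth.continuous
  have hcont : Continuous (glue xe zp zn) :=
    continuous_iff_continuousAt.2 fun y => (he' y).continuousAt
  have hderiv : deriv (glue xe zp zn) = e' := funext fun y => (he' y).deriv
  have hstep : ∀ y, glue xe zp zn (y + L) ≤ glue xe zp zn y :=
    glue_add_le hL.le (fun x hx => hzp.le_add_period hfp hL hx)
      (fun x hx => hzn.le_add_period hfn hL hx) hzp.nonneg hzn.nonneg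
  exact
    { smooth := contDiff_two_of_hasDerivAt he' he'' <|
        (continuous_eta_comp hf₁.smooth.continuous hf₂.smooth.continuous hcont).neg.congr
          fun y => (hode y).symm
      bdd := exists_abs_glue_le hzp.bdd hzn.bdd
      ode y := by rw [hderiv, (he'' y).deriv, hode, neg_neg]
      mono y := antitone_nat_of_succ_le fun n => by
        simpa only [Nat.cast_succ, add_mul, one_mul, add_assoc] using hstep (y + n * L)
      pos := ⟨xe - 1, by
        simpa only [glue, if_pos (sub_one_lt xe), show 2 * xe - (xe - 1) = xe + 1 by ring]
          using hzp.pos hfp.smooth (lt_add_one xe)⟩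
      neg := ⟨xe + 1, by
        simpa only [glue, if_neg (lt_add_one xe).not_gt, neg_lt_zero]
          using hzn.pos hfn.smooth (lt_add_one xe)⟩
      tail := Or.inr (bddAbove_glue_pos hzn.nonneg) }
end
end
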